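/- arXiv:1602.00543 — 15 statements merged into one kernel-verified Lean document; each statement's English description precedes it below -/
import Mathlib

section
/- Let (X, d_X, ≤₁) and (Y, d_Y, ≤₂) be partially ordered complete metric spaces, F : X × Y → X and G : Y × X → Y continuous maps with the mixed monotone property (F, G monotone increasing in first variable and decreasing in second). Suppose there exist k, l ∈ [0,1) with d_X(F(x,y), F(u,v)) ≤ (k/2)[d_X(x,u) + d_Y(y,v)] whenever x ≥₁ u and y ≤₂ v, and d_Y(G(y,x), G(v,u)) ≤ (l/2)[d_Y(y,v) + d_X(x,u)] whenever x ≤₁ u and y ≥₂ v. If there exists (x₀,y₀) ∈ X × Y with x₀ ≤₁ F(x₀,y₀) and y₀ ≥₂ G(y₀,x₀), then there exists (x,y) ∈ X × Y with F(x,y) = x and G(y,x) = y. -/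
theorem stmt_0 {X Y : Type*} [MetricSpace X] [MetricSpace Y]
    [CompleteSpace X] [CompleteSpace Y] [PartialOrder X] [PartialOrder Y]
    (F : X → Y → X) (G : Y → X → Y)
    (hFc : Continuous fun p : X × Y => F p.1 p.2)
    (hGc : Continuous fun p : Y × X => G p.1 p.2)
    (hFmono : ∀ y : Y, Monotone fun x => F x y)
    (hFanti : ∀ x : X, Antitone fun y => F x y)
    (hGanti : ∀ y : Y, Antitone fun x => G y x)
    (hGmono : ∀ x : X, Monotone fun y => G y x)
    (k l : ℝ) (hk0 : 0 ≤ k) (hk1 : k < 1) (hl0 : 0 ≤ l) (hl1 : l < 1)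
    (hF : ∀ x u : X, ∀ y v : Y, u ≤ x → y ≤ v →
      dist (F x y) (F u v) ≤ k / 2 * (dist x u + dist y v))
    (hG : ∀ x u : X, ∀ y v : Y, x ≤ u → v ≤ y →
      dist (G y x) (G v u) ≤ l / 2 * (dist y v + dist x u))
    (x₀ : X) (y₀ : Y) (hx₀ : x₀ ≤ F x₀ y₀) (hy₀ : G y₀ x₀ ≤ y₀) :
    ∃ (x : X) (y : Y), F x y = x ∧ G y x = y := by
  set m : ℝ := max k l with hm
  have hm1 : m < 1 := max_lt hk1 hl1
  have hm0 : 0 ≤ m := le_trans hk0 (le_max_left _ _)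
  set z : ℕ → X × Y := fun n =>
    Nat.rec (x₀, y₀) (fun _ p => (F p.1 p.2, G p.2 p.1)) n with hz
  have hzs : ∀ n, z (n + 1) = (F (z n).1 (z n).2, G (z n).2 (z n).1) := fun n => rfl
  have hord : ∀ n, (z n).1 ≤ (z (n + 1)).1 ∧ (z (n + 1)).2 ≤ (z n).2 := by
    intro n
    induction n with
    | zero => exact ⟨hx₀, hy₀⟩
    | succ n ih =>
      constructor
      · calc (z (n + 1)).1 = F (z n).1 (z n).2 := rfl
          _ ≤ F (z n).1 (z (n + 1)).2 := hFanti _ ih.2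
          _ ≤ F (z (n + 1)).1 (z (n + 1)).2 := hFmono _ ih.1
          _ = (z (n + 2)).1 := rfl
      · calc (z (n + 2)).2 = G (z (n + 1)).2 (z (n + 1)).1 := rfl
          _ ≤ G (z (n + 1)).2 (z n).1 := hGanti _ ih.1
          _ ≤ G (z n).2 (z n).1 := hGmono _ ih.2
          _ = (z (n + 1)).2 := rfl
  set d : ℕ → ℝ := fun n =>
    dist (z (n + 1)).1 (z n).1 + dist (z (n + 1)).2 (z n).2 with hd
  have hd0 : ∀ n, 0 ≤ d n := fun n => add_nonneg dist_nonneg dist_nonneg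
  have hstep : ∀ n, d (n + 1) ≤ m * d n := by
    intro n
    have h1 : dist (z (n + 2)).1 (z (n + 1)).1 ≤
        k / 2 * (dist (z (n + 1)).1 (z n).1 + dist (z (n + 1)).2 (z n).2) := by
      have := hF (z (n + 1)).1 (z n).1 (z (n + 1)).2 (z n).2 (hord n).1 (hord n).2
      simpa [hzs] using this
    have h2 : dist (z (n + 2)).2 (z (n + 1)).2 ≤
        l / 2 * (dist (z (n + 1)).2 (z n).2 + dist (z (n + 1)).1 (z n).1) := by
      have := hG (z n).1 (z (n + 1)).1 (z n).2 (z (n + 1)).2 (hord n).1 (hord n).2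
      rw [dist_comm ((z (n+2)).2) ((z (n+1)).2)]
      rw [dist_comm ((z (n+1)).2) ((z n).2), dist_comm ((z (n+1)).1) ((z n).1)]
      simpa [hzs] using this
    have hk' : k / 2 * d n ≤ m / 2 * d n := by
      apply mul_le_mul_of_nonneg_right _ (hd0 n)
      linarith [le_max_left k l]
    have hl' : l / 2 * d n ≤ m / 2 * d n := by
      apply mul_le_mul_of_nonneg_right _ (hd0 n)
      linarith [le_max_right k l]
    have : d (n + 1) ≤ k / 2 * d n + l / 2 * d n := by
      simp only [hd]
      calc dist (z (n + 2)).1 (z (n + 1)).1 + dist (z (n + 2)).2 (z (n + 1)).2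
          ≤ k / 2 * (dist (z (n + 1)).1 (z n).1 + dist (z (n + 1)).2 (z n).2)
            + l / 2 * (dist (z (n + 1)).2 (z n).2 + dist (z (n + 1)).1 (z n).1) :=
            add_le_add h1 h2
        _ = k / 2 * (dist (z (n + 1)).1 (z n).1 + dist (z (n + 1)).2 (z n).2)
            + l / 2 * (dist (z (n + 1)).1 (z n).1 + dist (z (n + 1)).2 (z n).2) := by ring
    clear_value d m z
    linarith
  have hgeo : ∀ n, d n ≤ m ^ n * d 0 := by
    intro n
    induction n with
    | zero => simp
    | succ n ih =>
      calc d (n + 1) ≤ m * d n := hstep n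
        _ ≤ m * (m ^ n * d 0) := mul_le_mul_of_nonneg_left ih hm0
        _ = m ^ (n + 1) * d 0 := by ring
  have hcx : CauchySeq fun n => (z n).1 := by
    apply cauchySeq_of_le_geometric m (d 0) hm1
    intro n
    rw [dist_comm]
    calc dist (z (n + 1)).1 (z n).1 ≤ d n := le_add_of_nonneg_right dist_nonneg
      _ ≤ m ^ n * d 0 := hgeo n
      _ = d 0 * m ^ n := mul_comm _ _
  have hcy : CauchySeq fun n => (z n).2 := by
    apply cauchySeq_of_le_geometric m (d 0) hm1
    intro n
    rw [dist_comm]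
    calc dist (z (n + 1)).2 (z n).2 ≤ d n := le_add_of_nonneg_left dist_nonneg
      _ ≤ m ^ n * d 0 := hgeo n
      _ = d 0 * m ^ n := mul_comm _ _
  obtain ⟨x, hx⟩ := cauchySeq_tendsto_of_complete hcx
  obtain ⟨y, hy⟩ := cauchySeq_tendsto_of_complete hcy
  refine ⟨x, y, ?_, ?_⟩
  · have h1 : Filter.Tendsto (fun n => (z (n + 1)).1) Filter.atTop (nhds x) :=
      hx.comp (Filter.tendsto_add_atTop_nat 1)
    have h2 : Filter.Tendsto (fun n => (z (n + 1)).1) Filter.atTop (nhds (F x y)) := by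
      have : Filter.Tendsto (fun n => ((z n).1, (z n).2)) Filter.atTop (nhds (x, y)) :=
        hx.prodMk_nhds hy
      exact (hFc.tendsto (x, y)).comp this
    exact tendsto_nhds_unique h2 h1
  · have h1 : Filter.Tendsto (fun n => (z (n + 1)).2) Filter.atTop (nhds y) :=
      hy.comp (Filter.tendsto_add_atTop_nat 1)
    have h2 : Filter.Tendsto (fun n => (z (n + 1)).2) Filter.atTop (nhds (G y x)) := by
      have : Filter.Tendsto (fun n => ((z n).2, (z n).1)) Filter.atTop (nhds (y, x)) :=
        hy.prodMk_nhds hx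
      exact (hGc.tendsto (y, x)).comp this
    exact tendsto_nhds_unique h2 h1
end

section
/- Under the hypotheses of the FG-coupled fixed point existence theorem with symmetric contraction constants k, l ∈ [0,1) (d_X(F(x,y),F(u,v)) ≤ (k/2)[d_X(x,u)+d_Y(y,v)] for x ≥₁ u, y ≤₂ v, and d_Y(G(y,x),G(v,u)) ≤ (l/2)[d_Y(y,v)+d_X(x,u)] for x ≤₁ u, y ≥₂ v), if additionally for every (x,y), (x₁,y₁) ∈ X × Y there exists (u,v) ∈ X × Y comparable (in the product order where (a,b) ≤ (c,d) iff a ≤₁ c and b ≥₂ d) to both, then the FG-coupled fixed point is unique. -/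
theorem stmt_1 {X Y : Type*} [MetricSpace X] [MetricSpace Y]
    [CompleteSpace X] [CompleteSpace Y] [PartialOrder X] [PartialOrder Y]
    (F : X → Y → X) (G : Y → X → Y)
    (hFc : Continuous fun p : X × Y => F p.1 p.2)
    (hGc : Continuous fun p : Y × X => G p.1 p.2)
    (hFmono : ∀ y : Y, Monotone fun x => F x y)
    (hFanti : ∀ x : X, Antitone fun y => F x y)
    (hGanti : ∀ y : Y, Antitone fun x => G y x)
    (hGmono : ∀ x : X, Monotone fun y => G y x)
    (k l : ℝ) (hk0 : 0 ≤ k) (hk1 : k < 1) (hl0 : 0 ≤ l) (hl1 : l < 1)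
    (hF : ∀ x u : X, ∀ y v : Y, u ≤ x → y ≤ v →
      dist (F x y) (F u v) ≤ k / 2 * (dist x u + dist y v))
    (hG : ∀ x u : X, ∀ y v : Y, x ≤ u → v ≤ y →
      dist (G y x) (G v u) ≤ l / 2 * (dist y v + dist x u))
    (hcomp : ∀ p q : X × Y, ∃ r : X × Y,
      ((p.1 ≤ r.1 ∧ r.2 ≤ p.2) ∨ (r.1 ≤ p.1 ∧ p.2 ≤ r.2)) ∧
      ((q.1 ≤ r.1 ∧ r.2 ≤ q.2) ∨ (r.1 ≤ q.1 ∧ q.2 ≤ r.2)))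
    (x₀ : X) (y₀ : Y) (hx₀ : x₀ ≤ F x₀ y₀) (hy₀ : G y₀ x₀ ≤ y₀) :
    ∃! p : X × Y, F p.1 p.2 = p.1 ∧ G p.2 p.1 = p.2 := by
  set T : X × Y → X × Y := fun p => (F p.1 p.2, G p.2 p.1) with hT
  have hTc : Continuous T := by
    apply Continuous.prodMk hFc
    exact hGc.comp (continuous_snd.prodMk continuous_fst)
  set R : X × Y → X × Y → Prop := fun p q => p.1 ≤ q.1 ∧ q.2 ≤ p.2 with hR
  have hTmono : ∀ p q, R p q → R (T p) (T q) := by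
    rintro p q ⟨h1, h2⟩
    constructor
    · exact le_trans (hFmono p.2 h1) (hFanti q.1 h2)
    · exact le_trans (hGmono q.1 h2) (hGanti p.2 h1)
  set c : ℝ := (k + l) / 2 with hc
  have hc0 : 0 ≤ c := by positivity
  have hc1 : c < 1 := by simp only [hc]; linarith
  set D : X × Y → X × Y → ℝ := fun p q => dist p.1 q.1 + dist p.2 q.2 with hD
  have hD0 : ∀ p q, 0 ≤ D p q := fun p q => add_nonneg dist_nonneg dist_nonneg
  have hDsymm : ∀ p q, D p q = D q p := by
    intro p q; simp only [hD, dist_comm]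
  have hcontr : ∀ p q, R p q → D (T p) (T q) ≤ c * D p q := by
    rintro p q ⟨h1, h2⟩
    have h1' := hF q.1 p.1 q.2 p.2 h1 h2
    have h2' := hG p.1 q.1 p.2 q.2 h1 h2
    simp only [hD, hT, hc]
    rw [dist_comm (F q.1 q.2), dist_comm q.1 p.1, dist_comm q.2 p.2] at h1'
    linarith
  have hcontr' : ∀ p q, R p q ∨ R q p → D (T p) (T q) ≤ c * D p q := by
    rintro p q (h | h)
    · exact hcontr p q h
    · rw [hDsymm (T p) (T q), hDsymm p q]; exact hcontr q p h
  -- existence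
  set z : ℕ → X × Y := fun n => T^[n] (x₀, y₀) with hz
  have hzsucc : ∀ n, z (n + 1) = T (z n) := by
    intro n; simp only [hz, Function.iterate_succ_apply']
  have hzR : ∀ n, R (z n) (z (n + 1)) := by
    intro n
    induction n with
    | zero => exact ⟨hx₀, hy₀⟩
    | succ m ih =>
      have h := hTmono _ _ ih
      rwa [← hzsucc m, ← hzsucc (m + 1)] at h
  have hzD : ∀ n, D (z n) (z (n + 1)) ≤ c ^ n * D (z 0) (z 1) := by
    intro n
    induction n with
    | zero => simp
    | succ m ih =>
      have step : D (z (m + 1)) (z (m + 2)) ≤ c * D (z m) (z (m + 1)) := by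
        have h := hcontr _ _ (hzR m)
        rwa [← hzsucc m, ← hzsucc (m + 1)] at h
      calc D (z (m + 1)) (z (m + 2)) ≤ c * D (z m) (z (m + 1)) := step
        _ ≤ c * (c ^ m * D (z 0) (z 1)) := mul_le_mul_of_nonneg_left ih hc0
        _ = c ^ (m + 1) * D (z 0) (z 1) := by ring
  have hcauchy1 : CauchySeq fun n => (z n).1 := by
    apply cauchySeq_of_le_geometric c (D (z 0) (z 1)) hc1
    intro n
    calc dist (z n).1 (z (n + 1)).1 ≤ D (z n) (z (n + 1)) := by
          simp only [hD]; nlinarith [dist_nonneg (α := Y) (x := (z n).2) (y := (z (n+1)).2)]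
      _ ≤ c ^ n * D (z 0) (z 1) := hzD n
      _ = D (z 0) (z 1) * c ^ n := by ring
  have hcauchy2 : CauchySeq fun n => (z n).2 := by
    apply cauchySeq_of_le_geometric c (D (z 0) (z 1)) hc1
    intro n
    calc dist (z n).2 (z (n + 1)).2 ≤ D (z n) (z (n + 1)) := by
          simp only [hD]; nlinarith [dist_nonneg (α := X) (x := (z n).1) (y := (z (n+1)).1)]
      _ ≤ c ^ n * D (z 0) (z 1) := hzD n
      _ = D (z 0) (z 1) * c ^ n := by ring
  obtain ⟨a, ha⟩ := cauchySeq_tendsto_of_complete hcauchy1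
  obtain ⟨b, hb⟩ := cauchySeq_tendsto_of_complete hcauchy2
  have hzlim : Filter.Tendsto z Filter.atTop (nhds (a, b)) := by
    have := ha.prodMk_nhds hb
    simpa using this
  have hfix : T (a, b) = (a, b) := by
    have h1 : Filter.Tendsto (fun n => z (n + 1)) Filter.atTop (nhds (a, b)) :=
      hzlim.comp (Filter.tendsto_add_atTop_nat 1)
    have h2 : Filter.Tendsto (fun n => T (z n)) Filter.atTop (nhds (T (a, b))) :=
      (hTc.tendsto (a, b)).comp hzlim
    exact tendsto_nhds_unique (by simpa only [hzsucc] using h1) h2 |>.symm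
  -- uniqueness
  refine ⟨(a, b), ⟨congrArg Prod.fst hfix, congrArg Prod.snd hfix⟩, ?_⟩
  have key : ∀ p q : X × Y, T p = p → T q = q → p = q := by
    intro p q hp hq
    obtain ⟨r, hrp, hrq⟩ := hcomp p q
    set w : ℕ → X × Y := fun n => T^[n] r with hw
    have hwsucc : ∀ n, w (n + 1) = T (w n) := by
      intro n; simp only [hw, Function.iterate_succ_apply']
    have main : ∀ (s : X × Y), T s = s → (R s r ∨ R r s) →
        ∀ n, D s (w n) ≤ c ^ n * D s r := by
      intro s hs hsr n
      have aux : ∀ n, (R s (w n) ∨ R (w n) s) ∧ D s (w n) ≤ c ^ n * D s r := by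
        intro n
        induction n with
        | zero => exact ⟨hsr.imp id id, by simp [hw]⟩
        | succ m ih =>
          obtain ⟨ihR, ihD⟩ := ih
          have hRs : R s (w (m+1)) ∨ R (w (m+1)) s := by
            rw [hwsucc m]
            rcases ihR with h | h
            · exact Or.inl (hs ▸ hTmono _ _ h)
            · exact Or.inr (hs ▸ hTmono _ _ h)
          refine ⟨hRs, ?_⟩
          have : D s (w (m + 1)) = D (T s) (T (w m)) := by rw [hwsucc m, hs]
          rw [this, pow_succ, mul_comm (c ^ m) c, mul_assoc]
          exact le_trans (hcontr' _ _ ihR) (mul_le_mul_of_nonneg_left ihD hc0)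
      exact (aux n).2
    have hp' : R p r ∨ R r p := by
      rcases hrp with h | h
      · exact Or.inl ⟨h.1, h.2⟩
      · exact Or.inr ⟨h.1, h.2⟩
    have hq' : R q r ∨ R r q := by
      rcases hrq with h | h
      · exact Or.inl ⟨h.1, h.2⟩
      · exact Or.inr ⟨h.1, h.2⟩
    have hDle : ∀ n, D p q ≤ c ^ n * (D p r + D q r) := by
      intro n
      have h1 := main p hp hp' n
      have h2 := main q hq hq' n
      have tri : D p q ≤ D p (w n) + D q (w n) := by
        have t1 := dist_triangle p.1 (w n).1 q.1
        have t2 := dist_triangle p.2 (w n).2 q.2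
        rw [dist_comm (w n).1 q.1] at t1
        rw [dist_comm (w n).2 q.2] at t2
        simp only [hD]
        linarith
      nlinarith
    have hlim : Filter.Tendsto (fun n => c ^ n * (D p r + D q r)) Filter.atTop (nhds 0) := by
      have := tendsto_pow_atTop_nhds_zero_of_lt_one hc0 hc1
      simpa using this.mul_const (D p r + D q r)
    have hDpq : D p q ≤ 0 := ge_of_tendsto' hlim hDle
    have h1 : p.1 = q.1 := by
      have : dist p.1 q.1 = 0 := le_antisymm (by
        simp only [hD] at hDpq
        nlinarith [dist_nonneg (α := Y) (x := p.2) (y := q.2)]) dist_nonneg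
      exact dist_eq_zero.mp this
    have h2 : p.2 = q.2 := by
      have : dist p.2 q.2 = 0 := le_antisymm (by
        simp only [hD] at hDpq
        nlinarith [dist_nonneg (α := X) (x := p.1) (y := q.1)]) dist_nonneg
      exact dist_eq_zero.mp this
    exact Prod.ext h1 h2
  intro q hq
  exact key q (a, b) (Prod.ext hq.1 hq.2) hfix
end

section
/- Let X, Y be partially ordered complete metric spaces such that: (i) every nondecreasing convergent sequence {xₙ} → x in X satisfies xₙ ≤₁ x for all n; (ii) every nonincreasing convergent sequence {yₙ} → y in Y satisfies yₙ ≥₂ y for all n. Let F : X × Y → X and G : Y × X → Y have the mixed monotone property (no continuity assumed) and suppose there exist k, l ∈ [0,1) with d_X(F(x,y),F(u,v)) ≤ (k/2)[d_X(x,u)+d_Y(y,v)] for x ≥₁ u, y ≤₂ v, and d_Y(G(y,x),G(v,u)) ≤ (l/2)[d_Y(y,v)+d_X(x,u)] for x ≤₁ u, y ≥₂ v. If there exists (x₀,y₀) with x₀ ≤₁ F(x₀,y₀) and y₀ ≥₂ G(y₀,x₀), then F and G have an FG-coupled fixed point. -/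
/-!
Order `X × Y` by `(x, y) ≤ (u, v) ↔ x ≤ u ∧ v ≤ y`, i.e. work in `X × Yᵒᵈ`. The mixed monotone
property says exactly that `T (x, y) = (F x y, G y x)` is monotone there, and the two
contraction conditions make `T` a `max k l`-contraction on comparable pairs for the max
metric. The hypothesis on `(x₀, y₀)` says `p₀ ≤ T p₀`, so the orbit of `p₀` is monotone and
Cauchy; its limit `p` dominates the orbit, which lets the contraction estimate be applied
between `p` and the orbit and forces `T p = p`.
-/

open Filter Topology

def MonotoneSeqLeLimit (α : Type*) [TopologicalSpace α] [Preorder α] : Prop :=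
  ∀ (s : ℕ → α) (a : α), Monotone s → Tendsto s atTop (𝓝 a) → ∀ n, s n ≤ a

theorem MonotoneSeqLeLimit.prod {α β : Type*} [TopologicalSpace α] [Preorder α]
    [TopologicalSpace β] [Preorder β] (hα : MonotoneSeqLeLimit α) (hβ : MonotoneSeqLeLimit β) :
    MonotoneSeqLeLimit (α × β) := fun s a hs hsa n =>
  ⟨hα (Prod.fst ∘ s) a.1 (monotone_fst.comp hs) ((continuous_fst.tendsto a).comp hsa) n,
    hβ (Prod.snd ∘ s) a.2 (monotone_snd.comp hs) ((continuous_snd.tendsto a).comp hsa) n⟩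

theorem half_mul_add_le_mul_max {k a b : ℝ} (hk : 0 ≤ k) : k / 2 * (a + b) ≤ k * max a b := by
  have : a + b ≤ 2 * max a b := by linarith [le_max_left a b, le_max_right a b]
  nlinarith

section OrderedContraction

variable {α : Type*} [Preorder α] {T : α → α} {K : ℝ}

theorem dist_iterate_succ_le_of_monotone [PseudoMetricSpace α] (hT : Monotone T)
    (hK : ∀ p q, p ≤ q → dist (T p) (T q) ≤ K * dist p q) (hK0 : 0 ≤ K) {p₀ : α}
    (hp₀ : p₀ ≤ T p₀) (n : ℕ) :
    dist (T^[n] p₀) (T^[n + 1] p₀) ≤ dist p₀ (T p₀) * K ^ n := by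
  induction n with
  | zero => simp
  | succ n ih =>
    have hle : T^[n] p₀ ≤ T^[n + 1] p₀ := hT.monotone_iterate_of_le_map hp₀ n.le_succ
    calc dist (T^[n + 1] p₀) (T^[n + 2] p₀)
        = dist (T (T^[n] p₀)) (T (T^[n + 1] p₀)) := by
          simp only [Function.iterate_succ_apply']
      _ ≤ K * dist (T^[n] p₀) (T^[n + 1] p₀) := hK _ _ hle
      _ ≤ K * (dist p₀ (T p₀) * K ^ n) := mul_le_mul_of_nonneg_left ih hK0
      _ = dist p₀ (T p₀) * K ^ (n + 1) := by ring

/-- The Ran–Reurings / Nieto–Rodríguez-López fixed point theorem. -/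
theorem exists_fixedPoint_of_monotone_of_contraction [MetricSpace α] [CompleteSpace α]
    (hα : MonotoneSeqLeLimit α) (hT : Monotone T)
    (hK : ∀ p q, p ≤ q → dist (T p) (T q) ≤ K * dist p q) (hK0 : 0 ≤ K) (hK1 : K < 1)
    {p₀ : α} (hp₀ : p₀ ≤ T p₀) : ∃ p, T p = p := by
  set u : ℕ → α := fun n => T^[n] p₀
  have hu_mono : Monotone u := hT.monotone_iterate_of_le_map hp₀
  obtain ⟨p, hup⟩ := cauchySeq_tendsto_of_complete <|
    cauchySeq_of_le_geometric K _ hK1 (dist_iterate_succ_le_of_monotone hT hK hK0 hp₀)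
  have hu_le : ∀ n, u n ≤ p := hα u p hu_mono hup
  have hup_dist : Tendsto (fun n => dist (u n) p) atTop (𝓝 0) :=
    tendsto_iff_dist_tendsto_zero.mp hup
  have hu_succ : Tendsto (fun n => u (n + 1)) atTop (𝓝 (T p)) := by
    refine tendsto_iff_dist_tendsto_zero.mpr <|
      squeeze_zero (fun _ => dist_nonneg) (fun n => ?_) (by simpa using hup_dist.const_mul K)
    simpa only [u, Function.iterate_succ_apply'] using hK _ _ (hu_le n)
  exact ⟨p, tendsto_nhds_unique hu_succ (hup.comp (tendsto_add_atTop_nat 1))⟩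

end OrderedContraction

theorem stmt_2 {X Y : Type*} [MetricSpace X] [MetricSpace Y]
    [CompleteSpace X] [CompleteSpace Y] [PartialOrder X] [PartialOrder Y]
    (hX : ∀ (s : ℕ → X) (x : X), Monotone s →
      Filter.Tendsto s Filter.atTop (nhds x) → ∀ n, s n ≤ x)
    (hY : ∀ (s : ℕ → Y) (y : Y), Antitone s →
      Filter.Tendsto s Filter.atTop (nhds y) → ∀ n, y ≤ s n)
    (F : X → Y → X) (G : Y → X → Y)
    (hFmono : ∀ y : Y, Monotone fun x => F x y)
    (hFanti : ∀ x : X, Antitone fun y => F x y)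
    (hGanti : ∀ y : Y, Antitone fun x => G y x)
    (hGmono : ∀ x : X, Monotone fun y => G y x)
    (k l : ℝ) (hk0 : 0 ≤ k) (hk1 : k < 1) (hl0 : 0 ≤ l) (hl1 : l < 1)
    (hF : ∀ x u : X, ∀ y v : Y, u ≤ x → y ≤ v →
      dist (F x y) (F u v) ≤ k / 2 * (dist x u + dist y v))
    (hG : ∀ x u : X, ∀ y v : Y, x ≤ u → v ≤ y →
      dist (G y x) (G v u) ≤ l / 2 * (dist y v + dist x u))
    (x₀ : X) (y₀ : Y) (hx₀ : x₀ ≤ F x₀ y₀) (hy₀ : G y₀ x₀ ≤ y₀) :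
    ∃ (x : X) (y : Y), F x y = x ∧ G y x = y := by
  -- Mathlib provides no `CompleteSpace` instance on order duals; the uniformity is that of `Y`.
  have : CompleteSpace Yᵒᵈ := ‹CompleteSpace Y›
  let T : X × Yᵒᵈ → X × Yᵒᵈ := fun p => (F p.1 p.2.ofDual, OrderDual.toDual (G p.2.ofDual p.1))
  have hT : Monotone T := fun p q ⟨h₁, h₂⟩ =>
    ⟨(hFmono _ h₁).trans (hFanti _ h₂), (hGmono _ h₂).trans (hGanti _ h₁)⟩
  have hK : ∀ p q, p ≤ q → dist (T p) (T q) ≤ max k l * dist p q := by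
    rintro ⟨x, y⟩ ⟨u, v⟩ ⟨hxu, hvy : v.ofDual ≤ y.ofDual⟩
    have hFd := hF u x v.ofDual y.ofDual hxu hvy
    have hGd := hG x u y.ofDual v.ofDual hxu hvy
    rw [dist_comm u, dist_comm v.ofDual, dist_comm] at hFd
    rw [add_comm] at hGd
    calc dist (T (x, y)) (T (u, v))
        = max (dist (F x y.ofDual) (F u v.ofDual)) (dist (G y.ofDual x) (G v.ofDual u)) := rfl
      _ ≤ max (k * dist (x, y) (u, v)) (l * dist (x, y) (u, v)) :=
        max_le_max (hFd.trans (half_mul_add_le_mul_max hk0))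
          (hGd.trans (half_mul_add_le_mul_max hl0))
      _ = max k l * dist (x, y) (u, v) := (max_mul_of_nonneg _ _ dist_nonneg).symm
  obtain ⟨⟨x, y⟩, hp⟩ := exists_fixedPoint_of_monotone_of_contraction
    (MonotoneSeqLeLimit.prod (β := Yᵒᵈ) hX hY) hT hK (hk0.trans (le_max_left k l))
    (max_lt hk1 hl1)
    (p₀ := (x₀, OrderDual.toDual y₀)) ⟨hx₀, hy₀⟩
  exact ⟨x, y.ofDual, congrArg Prod.fst hp, congrArg Prod.snd hp⟩
end

section
/- Let X, Y be partially ordered complete metric spaces and F : X × Y → X, G : Y × X → Y continuous with the mixed monotone property. Suppose there exist nonnegative k, l with k + l < 1 such that d_X(F(x,y),F(u,v)) ≤ k·d_X(x,u) + l·d_Y(y,v) whenever x ≥₁ u, y ≤₂ v, and d_Y(G(y,x),G(v,u)) ≤ k·d_Y(y,v) + l·d_X(x,u) whenever x ≤₁ u, y ≥₂ v. If there exists (x₀,y₀) with x₀ ≤₁ F(x₀,y₀) and y₀ ≥₂ G(y₀,x₀), then there exists (x,y) with F(x,y) = x and G(y,x) = y. -/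
/-!
Iterate the coupled map `T (x, y) = (F x y, G y x)` from `(x₀, y₀)`. The mixed monotone property
propagates `x₀ ≤ F x₀ y₀`, `G y₀ x₀ ≤ y₀` along the orbit, so consecutive iterates are always
comparable and the two contraction hypotheses apply to them. Adding them, the quantity
`dist xₙ xₙ₊₁ + dist yₙ yₙ₊₁` shrinks by the factor `k + l < 1` at each step, so both coordinate
sequences are Cauchy; by continuity of `T` their limit is a fixed point of `T`.
-/

open Filter Function

section CoupledMap

variable {X Y : Type*}

def coupledMap (F : X → Y → X) (G : Y → X → Y) (p : X × Y) : X × Y :=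
  (F p.1 p.2, G p.2 p.1)

theorem continuous_coupledMap [TopologicalSpace X] [TopologicalSpace Y]
    {F : X → Y → X} {G : Y → X → Y}
    (hFc : Continuous fun p : X × Y => F p.1 p.2) (hGc : Continuous fun p : Y × X => G p.1 p.2) :
    Continuous (coupledMap F G) :=
  hFc.prodMk (hGc.comp continuous_swap)

def IsCoupledLowerPoint [Preorder X] [Preorder Y] (F : X → Y → X) (G : Y → X → Y)
    (p : X × Y) : Prop :=
  p.1 ≤ (coupledMap F G p).1 ∧ (coupledMap F G p).2 ≤ p.2

section Order

variable [Preorder X] [Preorder Y] {F : X → Y → X} {G : Y → X → Y}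

theorem IsCoupledLowerPoint.map (hFmono : ∀ y, Monotone fun x => F x y)
    (hFanti : ∀ x, Antitone fun y => F x y) (hGanti : ∀ y, Antitone fun x => G y x)
    (hGmono : ∀ x, Monotone fun y => G y x) {p : X × Y} (hp : IsCoupledLowerPoint F G p) :
    IsCoupledLowerPoint F G (coupledMap F G p) :=
  ⟨(hFanti p.1 hp.2).trans (hFmono _ hp.1), (hGmono _ hp.2).trans (hGanti p.2 hp.1)⟩

theorem IsCoupledLowerPoint.iterate (hFmono : ∀ y, Monotone fun x => F x y)
    (hFanti : ∀ x, Antitone fun y => F x y) (hGanti : ∀ y, Antitone fun x => G y x)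
    (hGmono : ∀ x, Monotone fun y => G y x) {p : X × Y} (hp : IsCoupledLowerPoint F G p)
    (n : ℕ) : IsCoupledLowerPoint F G ((coupledMap F G)^[n] p) := by
  induction n with
  | zero => exact hp
  | succ n ih =>
    rw [iterate_succ_apply']
    exact ih.map hFmono hFanti hGanti hGmono

end Order

section Metric

variable [PseudoMetricSpace X] [PseudoMetricSpace Y]

/-- Used instead of the `max` distance of `X × Y`, which `coupledMap` contracts by `k + l` only
when `k` and `l` are both nonnegative. -/
def sumDist (p q : X × Y) : ℝ :=
  dist p.1 q.1 + dist p.2 q.2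

theorem cauchySeq_of_sumDist_succ_le_mul {u : ℕ → X × Y} {r : ℝ} (hr : r < 1)
    (h : ∀ n, sumDist (u (n + 1)) (u (n + 2)) ≤ r * sumDist (u n) (u (n + 1))) :
    CauchySeq u := by
  have hnonneg : ∀ n, 0 ≤ sumDist (u n) (u (n + 1)) := fun n => by
    unfold sumDist; positivity
  have hsum : Summable fun n => sumDist (u n) (u (n + 1)) :=
    summable_of_ratio_norm_eventually_le hr <| Eventually.of_forall fun n => by
      simpa only [Real.norm_of_nonneg (hnonneg _)] using h n
  have hfst : CauchySeq fun n => (u n).1 :=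
    cauchySeq_of_dist_le_of_summable _ (fun n => le_add_of_nonneg_right dist_nonneg) hsum
  have hsnd : CauchySeq fun n => (u n).2 :=
    cauchySeq_of_dist_le_of_summable _ (fun n => le_add_of_nonneg_left dist_nonneg) hsum
  exact hfst.prodMk hsnd

variable [Preorder X] [Preorder Y] {F : X → Y → X} {G : Y → X → Y}

theorem IsCoupledLowerPoint.sumDist_coupledMap_le {k l : ℝ}
    (hF : ∀ x u : X, ∀ y v : Y, u ≤ x → y ≤ v →
      dist (F x y) (F u v) ≤ k * dist x u + l * dist y v)
    (hG : ∀ x u : X, ∀ y v : Y, x ≤ u → v ≤ y →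
      dist (G y x) (G v u) ≤ k * dist y v + l * dist x u)
    {p : X × Y} (hp : IsCoupledLowerPoint F G p) :
    sumDist (coupledMap F G p) (coupledMap F G (coupledMap F G p)) ≤
      (k + l) * sumDist p (coupledMap F G p) := by
  obtain ⟨x, y⟩ := p
  have hx := hF _ _ _ _ hp.1 hp.2
  have hy := hG _ _ _ _ hp.1 hp.2
  simp only [sumDist, coupledMap] at hx hy ⊢
  rw [dist_comm (F x y) x, dist_comm (G y x) y, dist_comm (F (F x y) _)] at hx
  linarith

end Metric

end CoupledMap

theorem stmt_3_general {X Y : Type*} [MetricSpace X] [MetricSpace Y]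
    [CompleteSpace X] [CompleteSpace Y] [PartialOrder X] [PartialOrder Y]
    (F : X → Y → X) (G : Y → X → Y)
    (hFc : Continuous fun p : X × Y => F p.1 p.2)
    (hGc : Continuous fun p : Y × X => G p.1 p.2)
    (hFmono : ∀ y : Y, Monotone fun x => F x y)
    (hFanti : ∀ x : X, Antitone fun y => F x y)
    (hGanti : ∀ y : Y, Antitone fun x => G y x)
    (hGmono : ∀ x : X, Monotone fun y => G y x)
    (k l : ℝ) (hkl : k + l < 1)
    (hF : ∀ x u : X, ∀ y v : Y, u ≤ x → y ≤ v →
      dist (F x y) (F u v) ≤ k * dist x u + l * dist y v)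
    (hG : ∀ x u : X, ∀ y v : Y, x ≤ u → v ≤ y →
      dist (G y x) (G v u) ≤ k * dist y v + l * dist x u)
    (x₀ : X) (y₀ : Y) (hx₀ : x₀ ≤ F x₀ y₀) (hy₀ : G y₀ x₀ ≤ y₀) :
    ∃ (x : X) (y : Y), F x y = x ∧ G y x = y := by
  set T := coupledMap F G
  have hlower : ∀ n, IsCoupledLowerPoint F G (T^[n] (x₀, y₀)) :=
    IsCoupledLowerPoint.iterate hFmono hFanti hGanti hGmono ⟨hx₀, hy₀⟩
  have hcauchy : CauchySeq fun n => T^[n] (x₀, y₀) :=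
    cauchySeq_of_sumDist_succ_le_mul hkl fun n => by
      simpa only [iterate_succ_apply'] using (hlower n).sumDist_coupledMap_le hF hG
  obtain ⟨⟨x, y⟩, hlim⟩ := cauchySeq_tendsto_of_complete hcauchy
  have hfixed : IsFixedPt T (x, y) :=
    isFixedPt_of_tendsto_iterate hlim (continuous_coupledMap hFc hGc).continuousAt
  exact ⟨x, y, congrArg Prod.fst hfixed, congrArg Prod.snd hfixed⟩

theorem stmt_3 {X Y : Type*} [MetricSpace X] [MetricSpace Y]
    [CompleteSpace X] [CompleteSpace Y] [PartialOrder X] [PartialOrder Y]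
    (F : X → Y → X) (G : Y → X → Y)
    (hFc : Continuous fun p : X × Y => F p.1 p.2)
    (hGc : Continuous fun p : Y × X => G p.1 p.2)
    (hFmono : ∀ y : Y, Monotone fun x => F x y)
    (hFanti : ∀ x : X, Antitone fun y => F x y)
    (hGanti : ∀ y : Y, Antitone fun x => G y x)
    (hGmono : ∀ x : X, Monotone fun y => G y x)
    (k l : ℝ) (hk0 : 0 ≤ k) (hl0 : 0 ≤ l) (hkl : k + l < 1)
    (hF : ∀ x u : X, ∀ y v : Y, u ≤ x → y ≤ v →
      dist (F x y) (F u v) ≤ k * dist x u + l * dist y v)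
    (hG : ∀ x u : X, ∀ y v : Y, x ≤ u → v ≤ y →
      dist (G y x) (G v u) ≤ k * dist y v + l * dist x u)
    (x₀ : X) (y₀ : Y) (hx₀ : x₀ ≤ F x₀ y₀) (hy₀ : G y₀ x₀ ≤ y₀) :
    ∃ (x : X) (y : Y), F x y = x ∧ G y x = y :=
  stmt_3_general F G hFc hGc hFmono hFanti hGanti hGmono k l hkl hF hG x₀ y₀ hx₀ hy₀
end

section
/- Under the hypotheses that X, Y are partially ordered complete metric spaces, F : X × Y → X and G : Y × X → Y are continuous with the mixed monotone property, there exist nonnegative k, l with k + l < 1 satisfying d_X(F(x,y),F(u,v)) ≤ k·d_X(x,u) + l·d_Y(y,v) for x ≥₁ u, y ≤₂ v and d_Y(G(y,x),G(v,u)) ≤ k·d_Y(y,v) + l·d_X(x,u) for x ≤₁ u, y ≥₂ v, there exists (x₀,y₀) with x₀ ≤₁ F(x₀,y₀), y₀ ≥₂ G(y₀,x₀), and for every two points of X × Y there exists a point comparable to both in the product order, the FG-coupled fixed point is unique. -/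
theorem stmt_4 {X Y : Type*} [MetricSpace X] [MetricSpace Y]
    [CompleteSpace X] [CompleteSpace Y] [PartialOrder X] [PartialOrder Y]
    (F : X → Y → X) (G : Y → X → Y)
    (hFc : Continuous fun p : X × Y => F p.1 p.2)
    (hGc : Continuous fun p : Y × X => G p.1 p.2)
    (hFmono : ∀ y : Y, Monotone fun x => F x y)
    (hFanti : ∀ x : X, Antitone fun y => F x y)
    (hGanti : ∀ y : Y, Antitone fun x => G y x)
    (hGmono : ∀ x : X, Monotone fun y => G y x)
    (k l : ℝ) (hk0 : 0 ≤ k) (hl0 : 0 ≤ l) (hkl : k + l < 1)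
    (hF : ∀ x u : X, ∀ y v : Y, u ≤ x → y ≤ v →
      dist (F x y) (F u v) ≤ k * dist x u + l * dist y v)
    (hG : ∀ x u : X, ∀ y v : Y, x ≤ u → v ≤ y →
      dist (G y x) (G v u) ≤ k * dist y v + l * dist x u)
    (hcomp : ∀ p q : X × Y, ∃ r : X × Y,
      ((p.1 ≤ r.1 ∧ r.2 ≤ p.2) ∨ (r.1 ≤ p.1 ∧ p.2 ≤ r.2)) ∧
      ((q.1 ≤ r.1 ∧ r.2 ≤ q.2) ∨ (r.1 ≤ q.1 ∧ q.2 ≤ r.2)))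
    (x₀ : X) (y₀ : Y) (hx₀ : x₀ ≤ F x₀ y₀) (hy₀ : G y₀ x₀ ≤ y₀) :
    ∃! p : X × Y, F p.1 p.2 = p.1 ∧ G p.2 p.1 = p.2 := by
  set c := k + l with hc
  have hc0 : 0 ≤ c := add_nonneg hk0 hl0
  set T : X × Y → X × Y := fun p => (F p.1 p.2, G p.2 p.1) with hT
  set Comp : X × Y → X × Y → Prop :=
    fun p q => (p.1 ≤ q.1 ∧ q.2 ≤ p.2) ∨ (q.1 ≤ p.1 ∧ p.2 ≤ q.2) with hComp
  have hTc : Continuous T := hFc.prodMk (hGc.comp continuous_swap)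
  -- T preserves comparability
  have hpres : ∀ p q, Comp p q → Comp (T p) (T q) := by
    rintro p q (⟨h1, h2⟩ | ⟨h1, h2⟩)
    · exact Or.inl ⟨le_trans (hFmono p.2 h1) (hFanti q.1 h2),
        le_trans (hGanti q.2 h1) (hGmono p.1 h2)⟩
    · exact Or.inr ⟨le_trans (hFmono q.2 h1) (hFanti p.1 h2),
        le_trans (hGanti p.2 h1) (hGmono q.1 h2)⟩
  -- T contracts on comparable pairs
  have hcontr : ∀ p q, Comp p q → dist (T p) (T q) ≤ c * dist p q := by
    intro p q hpq
    have hd1 : dist (F p.1 p.2) (F q.1 q.2) ≤ k * dist p.1 q.1 + l * dist p.2 q.2 := by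
      rcases hpq with ⟨h1, h2⟩ | ⟨h1, h2⟩
      · have := hF q.1 p.1 q.2 p.2 h1 h2
        rw [dist_comm p.1 q.1, dist_comm p.2 q.2]
        rwa [dist_comm (F q.1 q.2) (F p.1 p.2)] at this
      · exact hF p.1 q.1 p.2 q.2 h1 h2
    have hd2 : dist (G p.2 p.1) (G q.2 q.1) ≤ k * dist p.2 q.2 + l * dist p.1 q.1 := by
      rcases hpq with ⟨h1, h2⟩ | ⟨h1, h2⟩
      · exact hG p.1 q.1 p.2 q.2 h1 h2
      · have := hG q.1 p.1 q.2 p.2 h1 h2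
        rw [dist_comm p.2 q.2, dist_comm p.1 q.1]
        rwa [dist_comm (G q.2 q.1) (G p.2 p.1)] at this
    have hm1 : dist p.1 q.1 ≤ dist p q := le_max_left _ _
    have hm2 : dist p.2 q.2 ≤ dist p q := le_max_right _ _
    rw [Prod.dist_eq]
    apply max_le
    · calc dist (T p).1 (T q).1 ≤ k * dist p.1 q.1 + l * dist p.2 q.2 := hd1
        _ ≤ k * dist p q + l * dist p q := add_le_add
            (mul_le_mul_of_nonneg_left hm1 hk0) (mul_le_mul_of_nonneg_left hm2 hl0)
        _ = c * dist p q := by ring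
    · calc dist (T p).2 (T q).2 ≤ k * dist p.2 q.2 + l * dist p.1 q.1 := hd2
        _ ≤ k * dist p q + l * dist p q := add_le_add
            (mul_le_mul_of_nonneg_left hm2 hk0) (mul_le_mul_of_nonneg_left hm1 hl0)
        _ = c * dist p q := by ring
  -- iterates from p₀
  set p₀ : X × Y := (x₀, y₀) with hp₀
  set a : ℕ → X × Y := fun n => T^[n] p₀ with ha
  have hstep : ∀ n, a (n + 1) = T (a n) := by
    intro n; simp [ha, Function.iterate_succ_apply']
  have hcompn : ∀ n, Comp (a n) (a (n + 1)) := by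
    intro n
    induction n with
    | zero =>
      have : Comp p₀ (T p₀) := Or.inl ⟨hx₀, hy₀⟩
      simpa [ha] using this
    | succ m ih =>
      have := hpres _ _ ih
      rwa [← hstep m, ← hstep (m + 1)] at this
  have hdistn : ∀ n, dist (a n) (a (n + 1)) ≤ dist p₀ (T p₀) * c ^ n := by
    intro n
    induction n with
    | zero => simp [ha]
    | succ m ih =>
      calc dist (a (m + 1)) (a (m + 1 + 1))
            = dist (T (a m)) (T (a (m + 1))) := by rw [hstep (m + 1), hstep m]
        _ ≤ c * dist (a m) (a (m + 1)) :=
            hcontr _ _ (hcompn m)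
        _ ≤ c * (dist p₀ (T p₀) * c ^ m) := mul_le_mul_of_nonneg_left ih hc0
        _ = dist p₀ (T p₀) * c ^ (m + 1) := by ring
  have hcauchy : CauchySeq a := cauchySeq_of_le_geometric c _ hkl hdistn
  obtain ⟨p, hp⟩ := cauchySeq_tendsto_of_complete hcauchy
  have hfix : T p = p := by
    have h1 : Filter.Tendsto (fun n => a (n + 1)) Filter.atTop (nhds p) :=
      hp.comp (Filter.tendsto_add_atTop_nat 1)
    have h2 : Filter.Tendsto (fun n => T (a n)) Filter.atTop (nhds (T p)) :=
      (hTc.tendsto p).comp hp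
    have : (fun n => a (n + 1)) = fun n => T (a n) := funext hstep
    rw [this] at h1
    exact tendsto_nhds_unique h2 h1
  -- key uniqueness lemma
  have huniq : ∀ q r : X × Y, T q = q → T r = r → q = r := by
    intro q r hq hr
    obtain ⟨s, hs1, hs2⟩ := hcomp q r
    have hcq : Comp q s := hs1
    have hcr : Comp r s := hs2
    have hbound : ∀ n, dist q r ≤ (dist q s + dist s r) * c ^ n := by
      intro n
      have hq' : ∀ m, Comp q (T^[m] s) ∧ dist q (T^[m] s) ≤ dist q s * c ^ m := by
        intro m
        induction m with
        | zero =>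
            simp only [Function.iterate_zero, id_eq, pow_zero, mul_one]
            exact ⟨hcq, le_refl _⟩
        | succ j ih =>
          rw [Function.iterate_succ_apply']
          constructor
          · have := hpres q (T^[j] s) ih.1
            rwa [hq] at this
          · calc dist q (T (T^[j] s)) = dist (T q) (T (T^[j] s)) := by rw [hq]
              _ ≤ c * dist q (T^[j] s) := hcontr _ _ ih.1
              _ ≤ c * (dist q s * c ^ j) := mul_le_mul_of_nonneg_left ih.2 hc0
              _ = dist q s * c ^ (j + 1) := by ring
      have hr' : ∀ m, Comp r (T^[m] s) ∧ dist r (T^[m] s) ≤ dist r s * c ^ m := by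
        intro m
        induction m with
        | zero =>
            simp only [Function.iterate_zero, id_eq, pow_zero, mul_one]
            exact ⟨hcr, le_refl _⟩
        | succ j ih =>
          rw [Function.iterate_succ_apply']
          constructor
          · have := hpres r (T^[j] s) ih.1
            rwa [hr] at this
          · calc dist r (T (T^[j] s)) = dist (T r) (T (T^[j] s)) := by rw [hr]
              _ ≤ c * dist r (T^[j] s) := hcontr _ _ ih.1
              _ ≤ c * (dist r s * c ^ j) := mul_le_mul_of_nonneg_left ih.2 hc0
              _ = dist r s * c ^ (j + 1) := by ring
      calc dist q r ≤ dist q (T^[n] s) + dist (T^[n] s) r := dist_triangle _ _ _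
        _ ≤ dist q s * c ^ n + dist r s * c ^ n := by
            refine add_le_add (hq' n).2 ?_
            rw [dist_comm]
            exact (hr' n).2
        _ = (dist q s + dist s r) * c ^ n := by rw [dist_comm s r]; ring
    have htend : Filter.Tendsto (fun n => (dist q s + dist s r) * c ^ n)
        Filter.atTop (nhds 0) := by
      have : |c| < 1 := abs_lt.mpr ⟨lt_of_lt_of_le neg_one_lt_zero hc0, hkl⟩
      simpa using (tendsto_pow_atTop_nhds_zero_of_abs_lt_one this).const_mul
        (dist q s + dist s r)
    have : dist q r ≤ 0 := ge_of_tendsto htend (Filter.Eventually.of_forall hbound)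
    exact eq_of_dist_eq_zero (le_antisymm this dist_nonneg)
  refine ⟨p, ⟨?_, ?_⟩, ?_⟩
  · exact congrArg Prod.fst hfix
  · exact congrArg Prod.snd hfix
  · rintro q ⟨hq1, hq2⟩
    exact huniq q p (Prod.ext hq1 hq2) hfix
end

section
/- Let X, Y be partially ordered complete metric spaces satisfying: (i) nondecreasing convergent sequences in X converge from below (xₙ ≤₁ lim x for all n); (ii) nonincreasing convergent sequences in Y converge from above (yₙ ≥₂ lim y for all n). Let F : X × Y → X, G : Y × X → Y have the mixed monotone property and satisfy, for nonnegative k, l with k + l < 1: d_X(F(x,y),F(u,v)) ≤ k·d_X(x,u) + l·d_Y(y,v) for x ≥₁ u, y ≤₂ v, and d_Y(G(y,x),G(v,u)) ≤ k·d_Y(y,v) + l·d_X(x,u) for x ≤₁ u, y ≥₂ v. If x₀ ≤₁ F(x₀,y₀) and y₀ ≥₂ G(y₀,x₀) for some (x₀,y₀), then an FG-coupled fixed point exists. -/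
theorem stmt_5 {X Y : Type*} [MetricSpace X] [MetricSpace Y]
    [CompleteSpace X] [CompleteSpace Y] [PartialOrder X] [PartialOrder Y]
    (hX : ∀ (s : ℕ → X) (x : X), Monotone s →
      Filter.Tendsto s Filter.atTop (nhds x) → ∀ n, s n ≤ x)
    (hY : ∀ (s : ℕ → Y) (y : Y), Antitone s →
      Filter.Tendsto s Filter.atTop (nhds y) → ∀ n, y ≤ s n)
    (F : X → Y → X) (G : Y → X → Y)
    (hFmono : ∀ y : Y, Monotone fun x => F x y)
    (hFanti : ∀ x : X, Antitone fun y => F x y)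
    (hGanti : ∀ y : Y, Antitone fun x => G y x)
    (hGmono : ∀ x : X, Monotone fun y => G y x)
    (k l : ℝ) (hk0 : 0 ≤ k) (hl0 : 0 ≤ l) (hkl : k + l < 1)
    (hF : ∀ x u : X, ∀ y v : Y, u ≤ x → y ≤ v →
      dist (F x y) (F u v) ≤ k * dist x u + l * dist y v)
    (hG : ∀ x u : X, ∀ y v : Y, x ≤ u → v ≤ y →
      dist (G y x) (G v u) ≤ k * dist y v + l * dist x u)
    (x₀ : X) (y₀ : Y) (hx₀ : x₀ ≤ F x₀ y₀) (hy₀ : G y₀ x₀ ≤ y₀) :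
    ∃ (x : X) (y : Y), F x y = x ∧ G y x = y := by
  set p : ℕ → X × Y := fun n =>
    Nat.rec (x₀, y₀) (fun _ q => (F q.1 q.2, G q.2 q.1)) n with hp
  set a : ℕ → X := fun n => (p n).1 with ha
  set b : ℕ → Y := fun n => (p n).2 with hb
  have hstepa : ∀ n, a (n + 1) = F (a n) (b n) := fun n => rfl
  have hstepb : ∀ n, b (n + 1) = G (b n) (a n) := fun n => rfl
  -- monotonicity
  have hmono : ∀ n, a n ≤ a (n + 1) ∧ b (n + 1) ≤ b n := by
    intro n
    induction n with
    | zero => exact ⟨hx₀, hy₀⟩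
    | succ m ih =>
      constructor
      · rw [hstepa (m + 1), hstepa m]
        calc F (a m) (b m) ≤ F (a (m+1)) (b m) := hFmono (b m) ih.1
          _ ≤ F (a (m+1)) (b (m+1)) := hFanti (a (m+1)) ih.2
      · rw [hstepb (m + 1), hstepb m]
        calc G (b (m+1)) (a (m+1)) ≤ G (b m) (a (m+1)) := hGmono (a (m+1)) ih.2
          _ ≤ G (b m) (a m) := hGanti (b m) ih.1
  have hamono : Monotone a := monotone_nat_of_le_succ fun n => (hmono n).1
  have hbanti : Antitone b := antitone_nat_of_succ_le fun n => (hmono n).2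
  set D : ℝ := dist (a 1) (a 0) + dist (b 1) (b 0) with hD
  have hkl0 : 0 ≤ k + l := add_nonneg hk0 hl0
  have key : ∀ n, dist (a (n + 1)) (a n) + dist (b (n + 1)) (b n) ≤ (k + l) ^ n * D := by
    intro n
    induction n with
    | zero => simp [hD]
    | succ m ih =>
      have h1 : dist (a (m + 2)) (a (m + 1)) ≤
          k * dist (a (m + 1)) (a m) + l * dist (b (m + 1)) (b m) := by
        rw [hstepa (m + 1), hstepa m]
        exact hF _ _ _ _ (hmono m).1 (hmono m).2
      have h2 : dist (b (m + 2)) (b (m + 1)) ≤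
          k * dist (b (m + 1)) (b m) + l * dist (a (m + 1)) (a m) := by
        rw [hstepb (m + 1), hstepb m, dist_comm]
        have := hG (a m) (a (m + 1)) (b m) (b (m + 1)) (hmono m).1 (hmono m).2
        calc dist (G (b m) (a m)) (G (b (m+1)) (a (m+1)))
            ≤ k * dist (b m) (b (m+1)) + l * dist (a m) (a (m+1)) := this
          _ = k * dist (b (m+1)) (b m) + l * dist (a (m+1)) (a m) := by
              rw [dist_comm (b m), dist_comm (a m)]
      calc dist (a (m + 2)) (a (m + 1)) + dist (b (m + 2)) (b (m + 1))
          ≤ (k + l) * (dist (a (m + 1)) (a m) + dist (b (m + 1)) (b m)) := by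
            nlinarith [h1, h2]
        _ ≤ (k + l) * ((k + l) ^ m * D) := by
            exact mul_le_mul_of_nonneg_left ih hkl0
        _ = (k + l) ^ (m + 1) * D := by ring
  have hca : CauchySeq a := by
    apply cauchySeq_of_le_geometric (k + l) D hkl
    intro n
    have := key n
    have h0 : 0 ≤ dist (b (n + 1)) (b n) := dist_nonneg
    rw [dist_comm]
    linarith [this, h0]
  have hcb : CauchySeq b := by
    apply cauchySeq_of_le_geometric (k + l) D hkl
    intro n
    have := key n
    have h0 : 0 ≤ dist (a (n + 1)) (a n) := dist_nonneg
    rw [dist_comm]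
    linarith [this, h0]
  obtain ⟨x, hxlim⟩ := cauchySeq_tendsto_of_complete hca
  obtain ⟨y, hylim⟩ := cauchySeq_tendsto_of_complete hcb
  have hax : ∀ n, a n ≤ x := hX a x hamono hxlim
  have hyb : ∀ n, y ≤ b n := hY b y hbanti hylim
  -- F x y = x
  have hdax : Filter.Tendsto (fun n => dist x (a n)) Filter.atTop (nhds 0) :=
    tendsto_iff_dist_tendsto_zero.1 hxlim |>.congr (fun n => dist_comm (a n) x)
  have hdby : Filter.Tendsto (fun n => dist y (b n)) Filter.atTop (nhds 0) :=
    tendsto_iff_dist_tendsto_zero.1 hylim |>.congr (fun n => dist_comm (b n) y)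
  have hFx : Filter.Tendsto (fun n => a (n + 1)) Filter.atTop (nhds (F x y)) := by
    rw [tendsto_iff_dist_tendsto_zero]
    have hbound : ∀ n, dist (a (n + 1)) (F x y) ≤ k * dist x (a n) + l * dist y (b n) := by
      intro n
      rw [hstepa n, dist_comm]
      exact hF x (a n) y (b n) (hax n) (hyb n)
    have hlim0 : Filter.Tendsto (fun n => k * dist x (a n) + l * dist y (b n))
        Filter.atTop (nhds 0) := by
      have := ((hdax.const_mul k).add (hdby.const_mul l))
      simpa using this
    exact squeeze_zero (fun n => dist_nonneg) hbound hlim0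
  have hGy : Filter.Tendsto (fun n => b (n + 1)) Filter.atTop (nhds (G y x)) := by
    rw [tendsto_iff_dist_tendsto_zero]
    have hbound : ∀ n, dist (b (n + 1)) (G y x) ≤ k * dist y (b n) + l * dist x (a n) := by
      intro n
      rw [hstepb n]
      have := hG (a n) x (b n) y (hax n) (hyb n)
      calc dist (G (b n) (a n)) (G y x) ≤ k * dist (b n) y + l * dist (a n) x := this
        _ = k * dist y (b n) + l * dist x (a n) := by rw [dist_comm (b n), dist_comm (a n)]
    have hlim0 : Filter.Tendsto (fun n => k * dist y (b n) + l * dist x (a n))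
        Filter.atTop (nhds 0) := by
      have := ((hdby.const_mul k).add (hdax.const_mul l))
      simpa using this
    exact squeeze_zero (fun n => dist_nonneg) hbound hlim0
  have hxlim' : Filter.Tendsto (fun n => a (n + 1)) Filter.atTop (nhds x) :=
    hxlim.comp (Filter.tendsto_add_atTop_nat 1)
  have hylim' : Filter.Tendsto (fun n => b (n + 1)) Filter.atTop (nhds y) :=
    hylim.comp (Filter.tendsto_add_atTop_nat 1)
  exact ⟨x, y, tendsto_nhds_unique hFx hxlim', tendsto_nhds_unique hGy hylim'⟩
end

section
/- Let X, Y be partially ordered complete metric spaces and F : X × Y → X, G : Y × X → Y continuous with the mixed monotone property. Suppose there exist nonnegative k, l with k + l < 1 such that d_X(F(x,y),F(u,v)) ≤ k·d_X(x,F(x,y)) + l·d_X(u,F(u,v)) whenever x ≥₁ u, y ≤₂ v, and d_Y(G(y,x),G(v,u)) ≤ k·d_Y(y,G(y,x)) + l·d_Y(v,G(v,u)) whenever x ≤₁ u, y ≥₂ v (a Kannan-type condition). If there exists (x₀,y₀) with x₀ ≤₁ F(x₀,y₀) and y₀ ≥₂ G(y₀,x₀), then there exists (x,y) with F(x,y)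 = x and G(y,x) = y. -/
theorem stmt_6 {X Y : Type*} [MetricSpace X] [MetricSpace Y]
    [CompleteSpace X] [CompleteSpace Y] [PartialOrder X] [PartialOrder Y]
    (F : X → Y → X) (G : Y → X → Y)
    (hFc : Continuous fun p : X × Y => F p.1 p.2)
    (hGc : Continuous fun p : Y × X => G p.1 p.2)
    (hFmono : ∀ y : Y, Monotone fun x => F x y)
    (hFanti : ∀ x : X, Antitone fun y => F x y)
    (hGanti : ∀ y : Y, Antitone fun x => G y x)
    (hGmono : ∀ x : X, Monotone fun y => G y x)
    (k l : ℝ) (hk0 : 0 ≤ k) (hl0 : 0 ≤ l) (hkl : k + l < 1)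
    (hF : ∀ x u : X, ∀ y v : Y, u ≤ x → y ≤ v →
      dist (F x y) (F u v) ≤ k * dist x (F x y) + l * dist u (F u v))
    (hG : ∀ x u : X, ∀ y v : Y, x ≤ u → v ≤ y →
      dist (G y x) (G v u) ≤ k * dist y (G y x) + l * dist v (G v u))
    (x₀ : X) (y₀ : Y) (hx₀ : x₀ ≤ F x₀ y₀) (hy₀ : G y₀ x₀ ≤ y₀) :
    ∃ (x : X) (y : Y), F x y = x ∧ G y x = y := by
  -- iterative sequence
  set p : ℕ → X × Y := fun n => Nat.rec (x₀, y₀)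
    (fun _ q => (F q.1 q.2, G q.2 q.1)) n with hp
  set a : ℕ → X := fun n => (p n).1 with haf
  set b : ℕ → Y := fun n => (p n).2 with hbf
  have ha : ∀ n, a (n + 1) = F (a n) (b n) := fun n => rfl
  have hb : ∀ n, b (n + 1) = G (b n) (a n) := fun n => rfl
  have hk1 : 1 - k > 0 := by linarith
  have hl1 : 1 - l > 0 := by linarith
  -- monotonicity
  have mono : ∀ n, a n ≤ a (n + 1) ∧ b (n + 1) ≤ b n := by
    intro n
    induction n with
    | zero => exact ⟨hx₀, hy₀⟩
    | succ n ih =>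
      constructor
      · rw [ha n, ha (n + 1)]
        exact le_trans (hFmono (b n) ih.1) (hFanti (a (n + 1)) ih.2)
      · rw [hb n, hb (n + 1)]
        exact le_trans (hGanti (b (n + 1)) ih.1) (hGmono (a n) ih.2)
  -- contraction for a
  have da : ∀ n, dist (a (n + 2)) (a (n + 1)) ≤
      (l / (1 - k)) * dist (a (n + 1)) (a n) := by
    intro n
    have h := hF (a (n + 1)) (a n) (b (n + 1)) (b n) (mono n).1 (mono n).2
    rw [← ha n, ← ha (n + 1)] at h
    rw [div_mul_eq_mul_div, le_div_iff₀ hk1]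
    have h1 : dist (a (n + 1)) (a (n + 2)) = dist (a (n + 2)) (a (n + 1)) :=
      dist_comm _ _
    have h2 : dist (a n) (a (n + 1)) = dist (a (n + 1)) (a n) := dist_comm _ _
    nlinarith [h]
  have db : ∀ n, dist (b (n + 2)) (b (n + 1)) ≤
      (k / (1 - l)) * dist (b (n + 1)) (b n) := by
    intro n
    have h := hG (a n) (a (n + 1)) (b n) (b (n + 1)) (mono n).1 (mono n).2
    rw [← hb n, ← hb (n + 1)] at h
    rw [div_mul_eq_mul_div, le_div_iff₀ hl1]
    have h1 : dist (b (n + 1)) (b (n + 2)) = dist (b (n + 2)) (b (n + 1)) :=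
      dist_comm _ _
    have h2 : dist (b n) (b (n + 1)) = dist (b (n + 1)) (b n) := dist_comm _ _
    have h3 : dist (G (b (n + 1)) (a (n + 1))) (b (n + 2)) = 0 := by
      rw [hb (n + 1)]; exact dist_self _
    nlinarith [h, dist_comm (G (b n) (a n)) (G (b (n + 1)) (a (n + 1)))]
  -- geometric bounds
  have hr1 : l / (1 - k) < 1 := (div_lt_one hk1).mpr (by linarith)
  have hr1' : 0 ≤ l / (1 - k) := div_nonneg hl0 (le_of_lt hk1)
  have hr2 : k / (1 - l) < 1 := (div_lt_one hl1).mpr (by linarith)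
  have hr2' : 0 ≤ k / (1 - l) := div_nonneg hk0 (le_of_lt hl1)
  have geom : ∀ (r : ℝ) (c : ℕ → ℝ), 0 ≤ r →
      (∀ n, 0 ≤ c n) → (∀ n, c (n + 1) ≤ r * c n) →
      ∀ n, c n ≤ c 0 * r ^ n := by
    intro r c hr hc hstep n
    induction n with
    | zero => simp
    | succ n ih =>
      calc c (n + 1) ≤ r * c n := hstep n
        _ ≤ r * (c 0 * r ^ n) := by
            exact mul_le_mul_of_nonneg_left ih hr
        _ = c 0 * r ^ (n + 1) := by ring
  have ga := geom (l / (1 - k)) (fun n => dist (a (n + 1)) (a n)) hr1'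
    (fun n => dist_nonneg) da
  have gb := geom (k / (1 - l)) (fun n => dist (b (n + 1)) (b n)) hr2'
    (fun n => dist_nonneg) db
  -- Cauchy
  have ca : CauchySeq a := by
    apply cauchySeq_of_le_geometric (l / (1 - k)) (dist (a 1) (a 0)) hr1
    intro n
    rw [dist_comm]
    exact ga n
  have cb : CauchySeq b := by
    apply cauchySeq_of_le_geometric (k / (1 - l)) (dist (b 1) (b 0)) hr2
    intro n
    rw [dist_comm]
    exact gb n
  obtain ⟨xx, hxx⟩ := cauchySeq_tendsto_of_complete ca
  obtain ⟨yy, hyy⟩ := cauchySeq_tendsto_of_complete cb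
  refine ⟨xx, yy, ?_, ?_⟩
  · have h1 : Filter.Tendsto (fun n => F (a n) (b n)) Filter.atTop (nhds (F xx yy)) :=
      (hFc.tendsto (xx, yy)).comp (hxx.prodMk_nhds hyy)
    have h2 : Filter.Tendsto (fun n => a (n + 1)) Filter.atTop (nhds xx) :=
      hxx.comp (Filter.tendsto_add_atTop_nat 1)
    have h3 : (fun n => a (n + 1)) = fun n => F (a n) (b n) := funext ha
    rw [h3] at h2
    exact tendsto_nhds_unique h1 h2
  · have h1 : Filter.Tendsto (fun n => G (b n) (a n)) Filter.atTop (nhds (G yy xx)) :=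
      (hGc.tendsto (yy, xx)).comp (hyy.prodMk_nhds hxx)
    have h2 : Filter.Tendsto (fun n => b (n + 1)) Filter.atTop (nhds yy) :=
      hyy.comp (Filter.tendsto_add_atTop_nat 1)
    have h3 : (fun n => b (n + 1)) = fun n => G (b n) (a n) := funext hb
    rw [h3] at h2
    exact tendsto_nhds_unique h1 h2
end

section
/- Let X, Y be partially ordered complete metric spaces satisfying: (i) nondecreasing convergent sequences in X satisfy xₙ ≤₁ lim for all n; (ii) nonincreasing convergent sequences in Y satisfy yₙ ≥₂ lim for all n. Let F : X × Y → X, G : Y × X → Y have the mixed monotone property and satisfy, for nonnegative k, l with k + l < 1, the Kannan-type conditions d_X(F(x,y),F(u,v)) ≤ k·d_X(x,F(x,y)) + l·d_X(u,F(u,v)) for x ≥₁ u, y ≤₂ v, and d_Y(G(y,x),G(v,u)) ≤ k·d_Y(y,G(y,x)) + l·d_Y(v,G(v,u)) for x ≤₁ u, y ≥₂ v. If x₀ ≤₁ F(x₀,y₀) and y₀ ≥₂ G(y₀,x₀) for some (x₀,y₀), then an FG-coupled fixed point exists. -/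
theorem stmt_7 {X Y : Type*} [MetricSpace X] [MetricSpace Y]
    [CompleteSpace X] [CompleteSpace Y] [PartialOrder X] [PartialOrder Y]
    (hX : ∀ (s : ℕ → X) (x : X), Monotone s →
      Filter.Tendsto s Filter.atTop (nhds x) → ∀ n, s n ≤ x)
    (hY : ∀ (s : ℕ → Y) (y : Y), Antitone s →
      Filter.Tendsto s Filter.atTop (nhds y) → ∀ n, y ≤ s n)
    (F : X → Y → X) (G : Y → X → Y)
    (hFmono : ∀ y : Y, Monotone fun x => F x y)
    (hFanti : ∀ x : X, Antitone fun y => F x y)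
    (hGanti : ∀ y : Y, Antitone fun x => G y x)
    (hGmono : ∀ x : X, Monotone fun y => G y x)
    (k l : ℝ) (hk0 : 0 ≤ k) (hl0 : 0 ≤ l) (hkl : k + l < 1)
    (hF : ∀ x u : X, ∀ y v : Y, u ≤ x → y ≤ v →
      dist (F x y) (F u v) ≤ k * dist x (F x y) + l * dist u (F u v))
    (hG : ∀ x u : X, ∀ y v : Y, x ≤ u → v ≤ y →
      dist (G y x) (G v u) ≤ k * dist y (G y x) + l * dist v (G v u))
    (x₀ : X) (y₀ : Y) (hx₀ : x₀ ≤ F x₀ y₀) (hy₀ : G y₀ x₀ ≤ y₀) :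
    ∃ (x : X) (y : Y), F x y = x ∧ G y x = y := by
  have h1k : 0 < 1 - k := by linarith
  have h1l : 0 < 1 - l := by linarith
  set r : ℝ := max (l / (1 - k)) (k / (1 - l)) with hrdef
  have hr1 : r < 1 := by
    apply max_lt
    · rw [div_lt_one h1k]; linarith
    · rw [div_lt_one h1l]; linarith
  have hr0 : 0 ≤ r := le_trans (div_nonneg hl0 h1k.le) (le_max_left _ _)
  -- the iteration
  let p : ℕ → X × Y := fun n => Nat.rec (x₀, y₀) (fun _ q => (F q.1 q.2, G q.2 q.1)) n
  set x : ℕ → X := fun n => (p n).1 with hxdef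
  set y : ℕ → Y := fun n => (p n).2 with hydef
  have hx : ∀ n, x (n+1) = F (x n) (y n) := fun n => rfl
  have hy : ∀ n, y (n+1) = G (y n) (x n) := fun n => rfl
  have hstep : ∀ n, x n ≤ x (n+1) ∧ y (n+1) ≤ y n := by
    intro n; induction n with
    | zero => exact ⟨hx₀, hy₀⟩
    | succ n ih =>
      refine ⟨?_, ?_⟩
      · rw [hx (n+1), hx n]
        calc F (x n) (y n) ≤ F (x (n+1)) (y n) := hFmono _ ih.1
          _ ≤ F (x (n+1)) (y (n+1)) := hFanti _ ih.2
      · rw [hy (n+1), hy n]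
        calc G (y (n+1)) (x (n+1)) ≤ G (y n) (x (n+1)) := hGmono _ ih.2
          _ ≤ G (y n) (x n) := hGanti _ ih.1
  have hxmono : Monotone x := monotone_nat_of_le_succ fun n => (hstep n).1
  have hyanti : Antitone y := antitone_nat_of_succ_le fun n => (hstep n).2
  -- contraction on successive distances
  have hdx : ∀ n, dist (x (n+1)) (x (n+2)) ≤ r * dist (x n) (x (n+1)) := by
    intro n
    have h := hF (x (n+1)) (x n) (y (n+1)) (y n) (hstep n).1 (hstep n).2
    rw [← hx (n+1), ← hx n] at h
    have hdc : dist (x (n+2)) (x (n+1)) = dist (x (n+1)) (x (n+2)) := dist_comm _ _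
    rw [hdc] at h
    have h2 : dist (x (n+1)) (x (n+2)) ≤ (l / (1 - k)) * dist (x n) (x (n+1)) := by
      rw [div_mul_eq_mul_div, le_div_iff₀ h1k]; nlinarith
    exact h2.trans (mul_le_mul_of_nonneg_right (le_max_left _ _) dist_nonneg)
  have hdy : ∀ n, dist (y (n+1)) (y (n+2)) ≤ r * dist (y n) (y (n+1)) := by
    intro n
    have h := hG (x n) (x (n+1)) (y n) (y (n+1)) (hstep n).1 (hstep n).2
    rw [← hy n, ← hy (n+1)] at h
    have h2 : dist (y (n+1)) (y (n+2)) ≤ (k / (1 - l)) * dist (y n) (y (n+1)) := by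
      rw [div_mul_eq_mul_div, le_div_iff₀ h1l]; nlinarith
    exact h2.trans (mul_le_mul_of_nonneg_right (le_max_right _ _) dist_nonneg)
  have hgeomx : ∀ n, dist (x n) (x (n+1)) ≤ dist (x 0) (x 1) * r ^ n := by
    intro n; induction n with
    | zero => simp
    | succ n ih =>
      calc dist (x (n+1)) (x (n+2)) ≤ r * dist (x n) (x (n+1)) := hdx n
        _ ≤ r * (dist (x 0) (x 1) * r ^ n) := by
            exact mul_le_mul_of_nonneg_left ih hr0
        _ = dist (x 0) (x 1) * r ^ (n+1) := by ring
  have hgeomy : ∀ n, dist (y n) (y (n+1)) ≤ dist (y 0) (y 1) * r ^ n := by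
    intro n; induction n with
    | zero => simp
    | succ n ih =>
      calc dist (y (n+1)) (y (n+2)) ≤ r * dist (y n) (y (n+1)) := hdy n
        _ ≤ r * (dist (y 0) (y 1) * r ^ n) := by
            exact mul_le_mul_of_nonneg_left ih hr0
        _ = dist (y 0) (y 1) * r ^ (n+1) := by ring
  have hcx : CauchySeq x := cauchySeq_of_le_geometric r _ hr1 hgeomx
  have hcy : CauchySeq y := cauchySeq_of_le_geometric r _ hr1 hgeomy
  obtain ⟨a, ha⟩ := cauchySeq_tendsto_of_complete hcx
  obtain ⟨b, hb⟩ := cauchySeq_tendsto_of_complete hcy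
  have hxa : ∀ n, x n ≤ a := hX x a hxmono ha
  have hby : ∀ n, b ≤ y n := hY y b hyanti hb
  -- distances of successive terms tend to 0
  have hsx : Filter.Tendsto (fun n => x (n+1)) Filter.atTop (nhds a) :=
    ha.comp (Filter.tendsto_add_atTop_nat 1)
  have hsy : Filter.Tendsto (fun n => y (n+1)) Filter.atTop (nhds b) :=
    hb.comp (Filter.tendsto_add_atTop_nat 1)
  have hdx0 : Filter.Tendsto (fun n => dist (x n) (x (n+1))) Filter.atTop (nhds 0) := by
    have := ha.dist hsx; simpa using this
  have hdy0 : Filter.Tendsto (fun n => dist (y n) (y (n+1))) Filter.atTop (nhds 0) := by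
    have := hb.dist hsy; simpa using this
  refine ⟨a, b, ?_, ?_⟩
  · -- F a b = a
    have hbound : ∀ n, dist (F a b) (x (n+1)) ≤ k * dist a (F a b) + l * dist (x n) (x (n+1)) := by
      intro n
      have h := hF a (x n) b (y n) (hxa n) (hby n)
      rwa [← hx n] at h
    have hL : Filter.Tendsto (fun n => dist (F a b) (x (n+1))) Filter.atTop
        (nhds (dist (F a b) a)) := (tendsto_const_nhds.dist hsx)
    have hR : Filter.Tendsto (fun n => k * dist a (F a b) + l * dist (x n) (x (n+1)))
        Filter.atTop (nhds (k * dist a (F a b))) := by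
      have h0 : Filter.Tendsto (fun n => k * dist a (F a b) + l * dist (x n) (x (n+1)))
          Filter.atTop (nhds (k * dist a (F a b) + l * 0)) :=
        Filter.Tendsto.add tendsto_const_nhds (hdx0.const_mul l)
      simpa using h0
    have hfin : dist (F a b) a ≤ k * dist a (F a b) :=
      le_of_tendsto_of_tendsto' hL hR hbound
    have : dist (F a b) a = 0 := by
      rw [dist_comm a (F a b)] at hfin
      nlinarith [dist_nonneg (x := F a b) (y := a)]
    exact dist_eq_zero.mp this
  · -- G b a = b
    have hbound : ∀ n, dist (y (n+1)) (G b a) ≤ k * dist (y n) (y (n+1)) + l * dist b (G b a) := by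
      intro n
      have h := hG (x n) a (y n) b (hxa n) (hby n)
      rwa [← hy n] at h
    have hL : Filter.Tendsto (fun n => dist (y (n+1)) (G b a)) Filter.atTop
        (nhds (dist b (G b a))) := (hsy.dist tendsto_const_nhds)
    have hR : Filter.Tendsto (fun n => k * dist (y n) (y (n+1)) + l * dist b (G b a))
        Filter.atTop (nhds (l * dist b (G b a))) := by
      have h0 : Filter.Tendsto (fun n => k * dist (y n) (y (n+1)) + l * dist b (G b a))
          Filter.atTop (nhds (k * 0 + l * dist b (G b a))) :=
        Filter.Tendsto.add (hdy0.const_mul k) tendsto_const_nhds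
      simpa using h0
    have hfin : dist b (G b a) ≤ l * dist b (G b a) :=
      le_of_tendsto_of_tendsto' hL hR hbound
    have : dist b (G b a) = 0 := by
      nlinarith [dist_nonneg (x := b) (y := G b a)]
    exact (dist_eq_zero.mp this).symm
end

section
/- Let X, Y be partially ordered complete metric spaces and F : X × Y → X, G : Y × X → Y continuous with the mixed monotone property. Suppose there exist k, l ∈ [0, 1/2) such that d_X(F(x,y),F(u,v)) ≤ k·d_X(x,F(u,v)) + l·d_X(u,F(x,y)) whenever x ≥₁ u, y ≤₂ v, and d_Y(G(y,x),G(v,u)) ≤ k·d_Y(y,G(v,u)) + l·d_Y(v,G(y,x)) whenever x ≤₁ u, y ≥₂ v (a Chatterjea-type condition). If there exists (x₀,y₀) with x₀ ≤₁ F(x₀,y₀) and y₀ ≥₂ G(y₀,x₀), then there exists (x,y) with F(x,y) = x and G(y,x) = y. -/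
theorem stmt_8 {X Y : Type*} [MetricSpace X] [MetricSpace Y]
    [CompleteSpace X] [CompleteSpace Y] [PartialOrder X] [PartialOrder Y]
    (F : X → Y → X) (G : Y → X → Y)
    (hFc : Continuous fun p : X × Y => F p.1 p.2)
    (hGc : Continuous fun p : Y × X => G p.1 p.2)
    (hFmono : ∀ y : Y, Monotone fun x => F x y)
    (hFanti : ∀ x : X, Antitone fun y => F x y)
    (hGanti : ∀ y : Y, Antitone fun x => G y x)
    (hGmono : ∀ x : X, Monotone fun y => G y x)
    (k l : ℝ) (hk0 : 0 ≤ k) (hk1 : k < 1/2) (hl0 : 0 ≤ l) (hl1 : l < 1/2)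
    (hF : ∀ x u : X, ∀ y v : Y, u ≤ x → y ≤ v →
      dist (F x y) (F u v) ≤ k * dist x (F u v) + l * dist u (F x y))
    (hG : ∀ x u : X, ∀ y v : Y, x ≤ u → v ≤ y →
      dist (G y x) (G v u) ≤ k * dist y (G v u) + l * dist v (G y x))
    (x₀ : X) (y₀ : Y) (hx₀ : x₀ ≤ F x₀ y₀) (hy₀ : G y₀ x₀ ≤ y₀) :
    ∃ (x : X) (y : Y), F x y = x ∧ G y x = y := by
  set s : ℕ → X × Y := fun n => Nat.rec (x₀, y₀) (fun _ p => (F p.1 p.2, G p.2 p.1)) n with hs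
  have hsucc : ∀ n, s (n + 1) = (F (s n).1 (s n).2, G (s n).2 (s n).1) := fun n => rfl
  have hmono : ∀ n, (s n).1 ≤ (s (n + 1)).1 ∧ (s (n + 1)).2 ≤ (s n).2 := by
    intro n
    induction n with
    | zero => exact ⟨hx₀, hy₀⟩
    | succ n ih =>
      constructor
      · calc (s (n + 1)).1 = F (s n).1 (s n).2 := by rw [hsucc]
          _ ≤ F (s (n + 1)).1 (s n).2 := hFmono _ ih.1
          _ ≤ F (s (n + 1)).1 (s (n + 1)).2 := hFanti _ ih.2
          _ = (s (n + 2)).1 := by rw [hsucc]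
      · calc (s (n + 2)).2 = G (s (n + 1)).2 (s (n + 1)).1 := by rw [hsucc]
          _ ≤ G (s n).2 (s (n + 1)).1 := hGmono _ ih.2
          _ ≤ G (s n).2 (s n).1 := hGanti _ ih.1
          _ = (s (n + 1)).2 := by rw [hsucc]
  have hl' : (0:ℝ) < 1 - l := by linarith
  have hk' : (0:ℝ) < 1 - k := by linarith
  set r : ℝ := max (l / (1 - l)) (k / (1 - k)) with hrdef
  have hr0 : 0 ≤ r := le_trans (div_nonneg hl0 hl'.le) (le_max_left _ _)
  have hr1 : r < 1 := by
    apply max_lt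
    · rw [div_lt_one hl']; linarith
    · rw [div_lt_one hk']; linarith
  have hdx : ∀ n, dist (s (n + 1)).1 (s (n + 2)).1 ≤ r * dist (s n).1 (s (n + 1)).1 := by
    intro n
    have h := hF (s (n + 1)).1 (s n).1 (s (n + 1)).2 (s n).2 (hmono n).1 (hmono n).2
    rw [show F (s (n+1)).1 (s (n+1)).2 = (s (n+2)).1 from by rw [hsucc],
        show F (s n).1 (s n).2 = (s (n+1)).1 from by rw [hsucc]] at h
    simp only [dist_self, mul_zero, zero_add] at h
    have htri : dist (s n).1 (s (n + 2)).1 ≤ dist (s n).1 (s (n + 1)).1 + dist (s (n + 1)).1 (s (n + 2)).1 :=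
      dist_triangle _ _ _
    have hstep : dist (s (n + 1)).1 (s (n + 2)).1 ≤ (l / (1 - l)) * dist (s n).1 (s (n + 1)).1 := by
      rw [div_mul_eq_mul_div, le_div_iff₀ hl']
      have := dist_comm (s (n+2)).1 (s (n+1)).1
      nlinarith [dist_nonneg (x := (s n).1) (y := (s (n+1)).1)]
    exact hstep.trans (mul_le_mul_of_nonneg_right (le_max_left _ _) dist_nonneg)
  have hdy : ∀ n, dist (s (n + 1)).2 (s (n + 2)).2 ≤ r * dist (s n).2 (s (n + 1)).2 := by
    intro n
    have h := hG (s n).1 (s (n + 1)).1 (s n).2 (s (n + 1)).2 (hmono n).1 (hmono n).2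
    rw [show G (s n).2 (s n).1 = (s (n+1)).2 from by rw [hsucc],
        show G (s (n+1)).2 (s (n+1)).1 = (s (n+2)).2 from by rw [hsucc]] at h
    simp only [dist_self, mul_zero, add_zero] at h
    have htri : dist (s n).2 (s (n + 2)).2 ≤ dist (s n).2 (s (n + 1)).2 + dist (s (n + 1)).2 (s (n + 2)).2 :=
      dist_triangle _ _ _
    have hstep : dist (s (n + 1)).2 (s (n + 2)).2 ≤ (k / (1 - k)) * dist (s n).2 (s (n + 1)).2 := by
      rw [div_mul_eq_mul_div, le_div_iff₀ hk']
      nlinarith [dist_nonneg (x := (s n).2) (y := (s (n+1)).2)]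
    exact hstep.trans (mul_le_mul_of_nonneg_right (le_max_right _ _) dist_nonneg)
  have hgeoX : ∀ n, dist ((fun n => (s n).1) n) ((fun n => (s n).1) (n + 1)) ≤
      dist (s 0).1 (s 1).1 * r ^ n := by
    intro n
    induction n with
    | zero => simp only [zero_add, pow_zero, mul_one]; exact le_rfl
    | succ n ih =>
      calc dist (s (n + 1)).1 (s (n + 2)).1 ≤ r * dist (s n).1 (s (n + 1)).1 := hdx n
        _ ≤ r * (dist (s 0).1 (s 1).1 * r ^ n) := mul_le_mul_of_nonneg_left ih hr0
        _ = dist (s 0).1 (s 1).1 * r ^ (n + 1) := by ring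
  have hgeoY : ∀ n, dist ((fun n => (s n).2) n) ((fun n => (s n).2) (n + 1)) ≤
      dist (s 0).2 (s 1).2 * r ^ n := by
    intro n
    induction n with
    | zero => simp only [zero_add, pow_zero, mul_one]; exact le_rfl
    | succ n ih =>
      calc dist (s (n + 1)).2 (s (n + 2)).2 ≤ r * dist (s n).2 (s (n + 1)).2 := hdy n
        _ ≤ r * (dist (s 0).2 (s 1).2 * r ^ n) := mul_le_mul_of_nonneg_left ih hr0
        _ = dist (s 0).2 (s 1).2 * r ^ (n + 1) := by ring
  have hCX : CauchySeq fun n => (s n).1 := cauchySeq_of_le_geometric r _ hr1 hgeoX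
  have hCY : CauchySeq fun n => (s n).2 := cauchySeq_of_le_geometric r _ hr1 hgeoY
  obtain ⟨x, hx⟩ := cauchySeq_tendsto_of_complete hCX
  obtain ⟨y, hy⟩ := cauchySeq_tendsto_of_complete hCY
  refine ⟨x, y, ?_, ?_⟩
  · have h1 : Filter.Tendsto (fun n => F (s n).1 (s n).2) Filter.atTop (nhds (F x y)) :=
      (hFc.tendsto (x, y)).comp (hx.prodMk_nhds hy)
    have h2 : Filter.Tendsto (fun n => F (s n).1 (s n).2) Filter.atTop (nhds x) := by
      have : (fun n => F (s n).1 (s n).2) = fun n => (s (n + 1)).1 := by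
        funext n; rw [hsucc]
      rw [this]
      exact hx.comp (Filter.tendsto_add_atTop_nat 1)
    exact tendsto_nhds_unique h1 h2
  · have h1 : Filter.Tendsto (fun n => G (s n).2 (s n).1) Filter.atTop (nhds (G y x)) :=
      (hGc.tendsto (y, x)).comp (hy.prodMk_nhds hx)
    have h2 : Filter.Tendsto (fun n => G (s n).2 (s n).1) Filter.atTop (nhds y) := by
      have : (fun n => G (s n).2 (s n).1) = fun n => (s (n + 1)).2 := by
        funext n; rw [hsucc]
      rw [this]
      exact hy.comp (Filter.tendsto_add_atTop_nat 1)
    exact tendsto_nhds_unique h1 h2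
end

section
/- Let X, Y be partially ordered complete metric spaces satisfying: (i) nondecreasing convergent sequences in X satisfy xₙ ≤₁ lim for all n; (ii) nonincreasing convergent sequences in Y satisfy yₙ ≥₂ lim for all n. Let F : X × Y → X, G : Y × X → Y have the mixed monotone property and satisfy, for k, l ∈ [0, 1/2), the Chatterjea-type conditions d_X(F(x,y),F(u,v)) ≤ k·d_X(x,F(u,v)) + l·d_X(u,F(x,y)) for x ≥₁ u, y ≤₂ v, and d_Y(G(y,x),G(v,u)) ≤ k·d_Y(y,G(v,u)) + l·d_Y(v,G(y,x)) for x ≤₁ u, y ≥₂ v. If x₀ ≤₁ F(x₀,y₀) and y₀ ≥₂ G(y₀,x₀) for some (x₀,y₀), then an FG-coupled fixed point exists. -/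
theorem stmt_9 {X Y : Type*} [MetricSpace X] [MetricSpace Y]
    [CompleteSpace X] [CompleteSpace Y] [PartialOrder X] [PartialOrder Y]
    (hX : ∀ (s : ℕ → X) (x : X), Monotone s →
      Filter.Tendsto s Filter.atTop (nhds x) → ∀ n, s n ≤ x)
    (hY : ∀ (s : ℕ → Y) (y : Y), Antitone s →
      Filter.Tendsto s Filter.atTop (nhds y) → ∀ n, y ≤ s n)
    (F : X → Y → X) (G : Y → X → Y)
    (hFmono : ∀ y : Y, Monotone fun x => F x y)
    (hFanti : ∀ x : X, Antitone fun y => F x y)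
    (hGanti : ∀ y : Y, Antitone fun x => G y x)
    (hGmono : ∀ x : X, Monotone fun y => G y x)
    (k l : ℝ) (hk0 : 0 ≤ k) (hk1 : k < 1/2) (hl0 : 0 ≤ l) (hl1 : l < 1/2)
    (hF : ∀ x u : X, ∀ y v : Y, u ≤ x → y ≤ v →
      dist (F x y) (F u v) ≤ k * dist x (F u v) + l * dist u (F x y))
    (hG : ∀ x u : X, ∀ y v : Y, x ≤ u → v ≤ y →
      dist (G y x) (G v u) ≤ k * dist y (G v u) + l * dist v (G y x))
    (x₀ : X) (y₀ : Y) (hx₀ : x₀ ≤ F x₀ y₀) (hy₀ : G y₀ x₀ ≤ y₀) :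
    ∃ (x : X) (y : Y), F x y = x ∧ G y x = y := by
  have h1l : (0:ℝ) < 1 - l := by linarith
  have h1k : (0:ℝ) < 1 - k := by linarith
  set rX : ℝ := l / (1 - l) with hrXdef
  set rY : ℝ := k / (1 - k) with hrYdef
  have hrX0 : 0 ≤ rX := div_nonneg hl0 h1l.le
  have hrX1 : rX < 1 := (div_lt_one h1l).2 (by linarith)
  have hrY0 : 0 ≤ rY := div_nonneg hk0 h1k.le
  have hrY1 : rY < 1 := (div_lt_one h1k).2 (by linarith)
  let P : ℕ → X × Y := fun n => Nat.rec (x₀, y₀) (fun _ p => (F p.1 p.2, G p.2 p.1)) n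
  have hP1 : ∀ n, (P (n+1)).1 = F (P n).1 (P n).2 := fun n => rfl
  have hP2 : ∀ n, (P (n+1)).2 = G (P n).2 (P n).1 := fun n => rfl
  have hmono : ∀ n, (P n).1 ≤ (P (n+1)).1 ∧ (P (n+1)).2 ≤ (P n).2 := by
    intro n
    induction n with
    | zero => exact ⟨hx₀, hy₀⟩
    | succ n ih =>
      refine ⟨?_, ?_⟩
      · show F (P n).1 (P n).2 ≤ F (P (n+1)).1 (P (n+1)).2
        exact le_trans (hFmono (P n).2 ih.1) (hFanti (P (n+1)).1 ih.2)
      · show G (P (n+1)).2 (P (n+1)).1 ≤ G (P n).2 (P n).1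
        exact le_trans (hGanti (P (n+1)).2 ih.1) (hGmono (P n).1 ih.2)
  have hxmono : Monotone (fun n => (P n).1) := monotone_nat_of_le_succ (fun n => (hmono n).1)
  have hyanti : Antitone (fun n => (P n).2) := antitone_nat_of_succ_le (fun n => (hmono n).2)
  -- contraction estimates
  have hdx : ∀ n, dist ((P (n+1)).1) ((P (n+2)).1) ≤ rX * dist ((P n).1) ((P (n+1)).1) := by
    intro n
    have h := hF (P (n+1)).1 (P n).1 (P (n+1)).2 (P n).2 (hmono n).1 (hmono n).2
    rw [show F (P (n+1)).1 (P (n+1)).2 = (P (n+2)).1 from rfl,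
        show F (P n).1 (P n).2 = (P (n+1)).1 from rfl, dist_self, mul_zero, zero_add] at h
    have t := dist_triangle ((P n).1) ((P (n+1)).1) ((P (n+2)).1)
    have c := dist_comm ((P (n+2)).1) ((P (n+1)).1)
    rw [hrXdef, div_mul_eq_mul_div, le_div_iff₀ h1l]
    nlinarith [mul_le_mul_of_nonneg_left t hl0]
  have hdy : ∀ n, dist ((P (n+1)).2) ((P (n+2)).2) ≤ rY * dist ((P n).2) ((P (n+1)).2) := by
    intro n
    have h := hG (P n).1 (P (n+1)).1 (P n).2 (P (n+1)).2 (hmono n).1 (hmono n).2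
    rw [show G (P n).2 (P n).1 = (P (n+1)).2 from rfl,
        show G (P (n+1)).2 (P (n+1)).1 = (P (n+2)).2 from rfl, dist_self, mul_zero, add_zero] at h
    have t := dist_triangle ((P n).2) ((P (n+1)).2) ((P (n+2)).2)
    rw [hrYdef, div_mul_eq_mul_div, le_div_iff₀ h1k]
    nlinarith [mul_le_mul_of_nonneg_left t hk0]
  have hgx : ∀ n, dist ((P n).1) ((P (n+1)).1) ≤ dist ((P 0).1) ((P 1).1) * rX ^ n := by
    intro n
    induction n with
    | zero => rw [pow_zero, mul_one]; exact le_of_eq rfl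
    | succ n ih =>
      calc dist ((P (n+1)).1) ((P (n+2)).1) ≤ rX * dist ((P n).1) ((P (n+1)).1) := hdx n
        _ ≤ rX * (dist ((P 0).1) ((P 1).1) * rX ^ n) := mul_le_mul_of_nonneg_left ih hrX0
        _ = dist ((P 0).1) ((P 1).1) * rX ^ (n+1) := by ring
  have hgy : ∀ n, dist ((P n).2) ((P (n+1)).2) ≤ dist ((P 0).2) ((P 1).2) * rY ^ n := by
    intro n
    induction n with
    | zero => rw [pow_zero, mul_one]; exact le_of_eq rfl
    | succ n ih =>
      calc dist ((P (n+1)).2) ((P (n+2)).2) ≤ rY * dist ((P n).2) ((P (n+1)).2) := hdy n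
        _ ≤ rY * (dist ((P 0).2) ((P 1).2) * rY ^ n) := mul_le_mul_of_nonneg_left ih hrY0
        _ = dist ((P 0).2) ((P 1).2) * rY ^ (n+1) := by ring
  have hcx : CauchySeq (fun n => (P n).1) :=
    cauchySeq_of_le_geometric rX _ hrX1 hgx
  have hcy : CauchySeq (fun n => (P n).2) :=
    cauchySeq_of_le_geometric rY _ hrY1 hgy
  obtain ⟨xs, hxs⟩ := cauchySeq_tendsto_of_complete hcx
  obtain ⟨ys, hys⟩ := cauchySeq_tendsto_of_complete hcy
  have hxle : ∀ n, (P n).1 ≤ xs := hX _ xs hxmono hxs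
  have hyge : ∀ n, ys ≤ (P n).2 := hY _ ys hyanti hys
  have hxs' : Filter.Tendsto (fun n => (P (n+1)).1) Filter.atTop (nhds xs) :=
    hxs.comp (Filter.tendsto_add_atTop_nat 1)
  have hys' : Filter.Tendsto (fun n => (P (n+1)).2) Filter.atTop (nhds ys) :=
    hys.comp (Filter.tendsto_add_atTop_nat 1)
  have hd1 : Filter.Tendsto (fun n => dist xs ((P (n+1)).1)) Filter.atTop (nhds 0) := by
    simpa using (tendsto_const_nhds.dist hxs' :
      Filter.Tendsto (fun n => dist xs ((P (n+1)).1)) Filter.atTop (nhds (dist xs xs)))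
  have hd2 : Filter.Tendsto (fun n => dist ((P n).1) xs) Filter.atTop (nhds 0) := by
    simpa using (hxs.dist tendsto_const_nhds :
      Filter.Tendsto (fun n => dist ((P n).1) xs) Filter.atTop (nhds (dist xs xs)))
  have he1 : Filter.Tendsto (fun n => dist ys ((P (n+1)).2)) Filter.atTop (nhds 0) := by
    simpa using (tendsto_const_nhds.dist hys' :
      Filter.Tendsto (fun n => dist ys ((P (n+1)).2)) Filter.atTop (nhds (dist ys ys)))
  have he2 : Filter.Tendsto (fun n => dist ((P n).2) ys) Filter.atTop (nhds 0) := by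
    simpa using (hys.dist tendsto_const_nhds :
      Filter.Tendsto (fun n => dist ((P n).2) ys) Filter.atTop (nhds (dist ys ys)))
  have hFfix : F xs ys = xs := by
    set d := dist xs (F xs ys) with hd
    have key : ∀ n, d ≤ (1+k) * dist xs ((P (n+1)).1) + l * dist ((P n).1) xs + l * d := by
      intro n
      have h := hF xs ((P n).1) ys ((P n).2) (hxle n) (hyge n)
      rw [show F ((P n).1) ((P n).2) = (P (n+1)).1 from rfl] at h
      have t1 := dist_triangle xs ((P (n+1)).1) (F xs ys)
      have t2 := dist_triangle ((P n).1) xs (F xs ys)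
      have c1 := dist_comm ((P (n+1)).1) (F xs ys)
      nlinarith [mul_le_mul_of_nonneg_left t2 hl0]
    have hlim : Filter.Tendsto
        (fun n => (1+k) * dist xs ((P (n+1)).1) + l * dist ((P n).1) xs + l * d)
        Filter.atTop (nhds (l * d)) := by
      have := ((hd1.const_mul (1+k)).add (hd2.const_mul l)).add_const (l * d)
      simpa using this
    have hdl : d ≤ l * d := ge_of_tendsto hlim (Filter.Eventually.of_forall key)
    have hd0 : d = 0 := le_antisymm (by nlinarith) dist_nonneg
    exact (dist_eq_zero.1 hd0).symm
  have hGfix : G ys xs = ys := by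
    set d := dist ys (G ys xs) with hd
    have key : ∀ n, d ≤ (1+l) * dist ys ((P (n+1)).2) + k * dist ((P n).2) ys + k * d := by
      intro n
      have h := hG ((P n).1) xs ((P n).2) ys (hxle n) (hyge n)
      rw [show G ((P n).2) ((P n).1) = (P (n+1)).2 from rfl] at h
      have t1 := dist_triangle ys ((P (n+1)).2) (G ys xs)
      have t2 := dist_triangle ((P n).2) ys (G ys xs)
      nlinarith [mul_le_mul_of_nonneg_left t2 hk0]
    have hlim : Filter.Tendsto
        (fun n => (1+l) * dist ys ((P (n+1)).2) + k * dist ((P n).2) ys + k * d)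
        Filter.atTop (nhds (k * d)) := by
      have := ((he1.const_mul (1+l)).add (he2.const_mul k)).add_const (k * d)
      simpa using this
    have hdl : d ≤ k * d := ge_of_tendsto hlim (Filter.Eventually.of_forall key)
    have hd0 : d = 0 := le_antisymm (by nlinarith) dist_nonneg
    exact (dist_eq_zero.1 hd0).symm
  exact ⟨xs, ys, hFfix, hGfix⟩
end

section
/- Let F : X × Y → X and G : Y × X → Y have the mixed monotone property, satisfying d_X(F(x,y),F(u,v)) ≤ (k/2)[d_X(x,u)+d_Y(y,v)] for x ≥₁ u, y ≤₂ v and d_Y(G(y,x),G(v,u)) ≤ (l/2)[d_Y(y,v)+d_X(x,u)] for x ≤₁ u, y ≥₂ v, with k, l ∈ [0,1). Suppose x₀ ≤₁ F(x₀,y₀) and y₀ ≥₂ G(y₀,x₀), and define the iterates Fⁿ⁺¹(x₀,y₀) = F(Fⁿ(x₀,y₀), Gⁿ(y₀,x₀)) and Gⁿ⁺¹(y₀,x₀) = G(Gⁿ(y₀,x₀), Fⁿ(x₀,y₀)) with F⁰(x₀,y₀)=x₀, G⁰(y₀,x₀)=y₀. Then for all n ≥ 1: d_X(Fⁿ⁺¹(x₀,y₀),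 Fⁿ(x₀,y₀)) ≤ (k/2)·((k+l)/2)ⁿ⁻¹·[d_X(x₁,x₀)+d_Y(y₁,y₀)], where x₁ = F(x₀,y₀) and y₁ = G(y₀,x₀). -/
theorem stmt_10 {X Y : Type*} [MetricSpace X] [MetricSpace Y]
    [PartialOrder X] [PartialOrder Y]
    (F : X → Y → X) (G : Y → X → Y)
    (hFmono : ∀ y : Y, Monotone fun x => F x y)
    (hFanti : ∀ x : X, Antitone fun y => F x y)
    (hGanti : ∀ y : Y, Antitone fun x => G y x)
    (hGmono : ∀ x : X, Monotone fun y => G y x)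
    (k l : ℝ) (hk0 : 0 ≤ k) (hk1 : k < 1) (hl0 : 0 ≤ l) (hl1 : l < 1)
    (hF : ∀ x u : X, ∀ y v : Y, u ≤ x → y ≤ v →
      dist (F x y) (F u v) ≤ k / 2 * (dist x u + dist y v))
    (hG : ∀ x u : X, ∀ y v : Y, x ≤ u → v ≤ y →
      dist (G y x) (G v u) ≤ l / 2 * (dist y v + dist x u))
    (x₀ : X) (y₀ : Y) (hx₀ : x₀ ≤ F x₀ y₀) (hy₀ : G y₀ x₀ ≤ y₀)
    (p : ℕ → X) (q : ℕ → Y) (hp0 : p 0 = x₀) (hq0 : q 0 = y₀)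
    (hp : ∀ n, p (n + 1) = F (p n) (q n))
    (hq : ∀ n, q (n + 1) = G (q n) (p n)) :
    ∀ n : ℕ, 1 ≤ n →
      dist (p (n + 1)) (p n) ≤
        k / 2 * ((k + l) / 2) ^ (n - 1) * (dist (p 1) (p 0) + dist (q 1) (q 0)) := by
  -- monotonicity of the iterates
  have hmono : ∀ n, p n ≤ p (n + 1) ∧ q (n + 1) ≤ q n := by
    intro n
    induction n with
    | zero =>
      constructor
      · rw [hp0, hp 0, hp0, hq0]; exact hx₀
      · rw [hq0, hq 0, hp0, hq0]; exact hy₀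
    | succ n ih =>
      obtain ⟨ihp, ihq⟩ := ih
      constructor
      · rw [hp n, hp (n + 1)]
        exact le_trans (hFmono (q n) ihp) (hFanti (p (n + 1)) ihq)
      · rw [hq n, hq (n + 1)]
        exact le_trans (hGmono (p (n + 1)) ihq) (hGanti (q n) ihp)
  -- one-step contraction for the sum
  set D : ℕ → ℝ := fun n => dist (p (n + 1)) (p n) + dist (q (n + 1)) (q n) with hD
  have hstep : ∀ n, D (n + 1) ≤ (k + l) / 2 * D n := by
    intro n
    have h1 : dist (p (n + 2)) (p (n + 1)) ≤
        k / 2 * (dist (p (n + 1)) (p n) + dist (q (n + 1)) (q n)) := by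
      have := hF (p (n + 1)) (p n) (q (n + 1)) (q n) (hmono n).1 (hmono n).2
      rwa [← hp (n + 1), ← hp n] at this
    have h2 : dist (q (n + 2)) (q (n + 1)) ≤
        l / 2 * (dist (q (n + 1)) (q n) + dist (p (n + 1)) (p n)) := by
      have := hG (p n) (p (n + 1)) (q n) (q (n + 1)) (hmono n).1 (hmono n).2
      rw [← hq (n + 1), ← hq n] at this
      rwa [dist_comm (q (n + 1)) (q (n + 1 + 1)), dist_comm (q n) (q (n + 1)),
        dist_comm (p n) (p (n + 1))] at this
    simp only [hD]
    nlinarith [dist_nonneg (x := p (n + 1)) (y := p n),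
      dist_nonneg (x := q (n + 1)) (y := q n)]
  have hiter : ∀ n, D n ≤ ((k + l) / 2) ^ n * D 0 := by
    intro n
    induction n with
    | zero => simp
    | succ n ih =>
      calc D (n + 1) ≤ (k + l) / 2 * D n := hstep n
        _ ≤ (k + l) / 2 * (((k + l) / 2) ^ n * D 0) := by
            apply mul_le_mul_of_nonneg_left ih; positivity
        _ = ((k + l) / 2) ^ (n + 1) * D 0 := by ring
  intro n hn
  obtain ⟨m, rfl⟩ := Nat.exists_eq_add_of_le hn
  simp only [Nat.add_sub_cancel_left] at *
  have h1 : dist (p (1 + m + 1)) (p (1 + m)) ≤ k / 2 * D m := by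
    have e : 1 + m = m + 1 := by ring
    have := hF (p (m + 1)) (p m) (q (m + 1)) (q m) (hmono m).1 (hmono m).2
    rw [← hp (m + 1), ← hp m] at this
    rw [e]
    exact this
  calc dist (p (1 + m + 1)) (p (1 + m)) ≤ k / 2 * D m := h1
    _ ≤ k / 2 * (((k + l) / 2) ^ m * D 0) := by
        apply mul_le_mul_of_nonneg_left (hiter m); positivity
    _ = k / 2 * ((k + l) / 2) ^ m * D 0 := by ring
    _ = k / 2 * ((k + l) / 2) ^ m * (dist (p 1) (p 0) + dist (q 1) (q 0)) := rfl
end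

section
/- Let F : X × Y → X and G : Y × X → Y have the mixed monotone property and satisfy, for nonnegative k, l with k + l < 1, the Kannan-type conditions d_X(F(x,y),F(u,v)) ≤ k·d_X(x,F(x,y)) + l·d_X(u,F(u,v)) for x ≥₁ u, y ≤₂ v, and d_Y(G(y,x),G(v,u)) ≤ k·d_Y(y,G(y,x)) + l·d_Y(v,G(v,u)) for x ≤₁ u, y ≥₂ v. Suppose x₀ ≤₁ F(x₀,y₀) and y₀ ≥₂ G(y₀,x₀). Then for all n ≥ 1: d_X(Fⁿ⁺¹(x₀,y₀), Fⁿ(x₀,y₀)) ≤ (l/(1−k))ⁿ·d_X(x₁,x₀) and d_Y(Gⁿ⁺¹(y₀,x₀), Gⁿ(y₀,x₀)) ≤ (k/(1−l))ⁿ·d_Y(y₁,y₀), where x₁ = F(x₀,y₀), y₁ = G(y₀,x₀). -/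
theorem stmt_12 {X Y : Type*} [MetricSpace X] [MetricSpace Y]
    [PartialOrder X] [PartialOrder Y]
    (F : X → Y → X) (G : Y → X → Y)
    (hFmono : ∀ y : Y, Monotone fun x => F x y)
    (hFanti : ∀ x : X, Antitone fun y => F x y)
    (hGanti : ∀ y : Y, Antitone fun x => G y x)
    (hGmono : ∀ x : X, Monotone fun y => G y x)
    (k l : ℝ) (hk0 : 0 ≤ k) (hl0 : 0 ≤ l) (hkl : k + l < 1)
    (hF : ∀ x u : X, ∀ y v : Y, u ≤ x → y ≤ v →
      dist (F x y) (F u v) ≤ k * dist x (F x y) + l * dist u (F u v))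
    (hG : ∀ x u : X, ∀ y v : Y, x ≤ u → v ≤ y →
      dist (G y x) (G v u) ≤ k * dist y (G y x) + l * dist v (G v u))
    (x₀ : X) (y₀ : Y) (hx₀ : x₀ ≤ F x₀ y₀) (hy₀ : G y₀ x₀ ≤ y₀)
    (p : ℕ → X) (q : ℕ → Y) (hp0 : p 0 = x₀) (hq0 : q 0 = y₀)
    (hp : ∀ n, p (n + 1) = F (p n) (q n))
    (hq : ∀ n, q (n + 1) = G (q n) (p n)) :
    ∀ n : ℕ, 1 ≤ n →
      dist (p (n + 1)) (p n) ≤ (l / (1 - k)) ^ n * dist (p 1) (p 0) ∧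
      dist (q (n + 1)) (q n) ≤ (k / (1 - l)) ^ n * dist (q 1) (q 0) := by
  have hk1 : 0 < 1 - k := by linarith
  have hl1 : 0 < 1 - l := by linarith
  have hrk : 0 ≤ l / (1 - k) := div_nonneg hl0 hk1.le
  have hrl : 0 ≤ k / (1 - l) := div_nonneg hk0 hl1.le
  -- monotonicity of the sequences
  have hmono : ∀ n : ℕ, p n ≤ p (n + 1) ∧ q (n + 1) ≤ q n := by
    intro n
    induction n with
    | zero =>
      constructor
      · rw [hp0, hp 0, hp0, hq0]; exact hx₀
      · rw [hq0, hq 0, hp0, hq0]; exact hy₀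
    | succ n ih =>
      obtain ⟨ihp, ihq⟩ := ih
      constructor
      · calc p (n + 1) = F (p n) (q n) := hp n
          _ ≤ F (p (n + 1)) (q n) := hFmono (q n) ihp
          _ ≤ F (p (n + 1)) (q (n + 1)) := hFanti (p (n + 1)) ihq
          _ = p (n + 2) := (hp (n + 1)).symm
      · calc q (n + 2) = G (q (n + 1)) (p (n + 1)) := hq (n + 1)
          _ ≤ G (q n) (p (n + 1)) := hGmono (p (n + 1)) ihq
          _ ≤ G (q n) (p n) := hGanti (q n) ihp
          _ = q (n + 1) := (hq n).symm
  -- the main estimates, valid for all n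
  have main : ∀ n : ℕ,
      dist (p (n + 1)) (p n) ≤ (l / (1 - k)) ^ n * dist (p 1) (p 0) ∧
      dist (q (n + 1)) (q n) ≤ (k / (1 - l)) ^ n * dist (q 1) (q 0) := by
    intro n
    induction n with
    | zero => simp
    | succ n ih =>
      obtain ⟨ihp, ihq⟩ := ih
      constructor
      · have h := hF (p (n + 1)) (p n) (q (n + 1)) (q n) (hmono n).1 (hmono n).2
        rw [← hp (n + 1), ← hp n] at h
        rw [dist_comm (p (n + 1)) (p (n + 2)), dist_comm (p n) (p (n + 1))] at h
        have step : dist (p (n + 2)) (p (n + 1)) ≤ (l / (1 - k)) * dist (p (n + 1)) (p n) := by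
          rw [div_mul_eq_mul_div, le_div_iff₀ hk1]
          nlinarith [dist_nonneg (x := p (n + 2)) (y := p (n + 1))]
        calc dist (p (n + 2)) (p (n + 1)) ≤ (l / (1 - k)) * dist (p (n + 1)) (p n) := step
          _ ≤ (l / (1 - k)) * ((l / (1 - k)) ^ n * dist (p 1) (p 0)) :=
            mul_le_mul_of_nonneg_left ihp hrk
          _ = (l / (1 - k)) ^ (n + 1) * dist (p 1) (p 0) := by ring
      · have h := hG (p n) (p (n + 1)) (q n) (q (n + 1)) (hmono n).1 (hmono n).2
        rw [← hq (n + 1), ← hq n] at h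
        rw [dist_comm (q n) (q (n + 1)), dist_comm (q (n + 1)) (q (n + 2))] at h
        have step : dist (q (n + 2)) (q (n + 1)) ≤ (k / (1 - l)) * dist (q (n + 1)) (q n) := by
          rw [div_mul_eq_mul_div, le_div_iff₀ hl1]
          nlinarith [dist_nonneg (x := q (n + 2)) (y := q (n + 1))]
        calc dist (q (n + 2)) (q (n + 1)) ≤ (k / (1 - l)) * dist (q (n + 1)) (q n) := step
          _ ≤ (k / (1 - l)) * ((k / (1 - l)) ^ n * dist (q 1) (q 0)) :=
            mul_le_mul_of_nonneg_left ihq hrl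
          _ = (k / (1 - l)) ^ (n + 1) * dist (q 1) (q 0) := by ring
  exact fun n _ => main n
end

section
/- Let F : X × Y → X and G : Y × X → Y have the mixed monotone property and satisfy, for k, l ∈ [0, 1/2), the Chatterjea-type conditions d_X(F(x,y),F(u,v)) ≤ k·d_X(x,F(u,v)) + l·d_X(u,F(x,y)) for x ≥₁ u, y ≤₂ v, and d_Y(G(y,x),G(v,u)) ≤ k·d_Y(y,G(v,u)) + l·d_Y(v,G(y,x)) for x ≤₁ u, y ≥₂ v. Suppose x₀ ≤₁ F(x₀,y₀) and y₀ ≥₂ G(y₀,x₀). Then for all n ≥ 1: d_X(Fⁿ⁺¹(x₀,y₀), Fⁿ(x₀,y₀)) ≤ (l/(1−l))ⁿ·d_X(x₁,x₀) and d_Y(Gⁿ⁺¹(y₀,x₀), Gⁿ(y₀,x₀)) ≤ (k/(1−k))ⁿ·d_Y(y₁,y₀), where x₁ = F(x₀,y₀), y₁ = G(y₀,x₀). -/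
theorem stmt_13 {X Y : Type*} [MetricSpace X] [MetricSpace Y]
    [PartialOrder X] [PartialOrder Y]
    (F : X → Y → X) (G : Y → X → Y)
    (hFmono : ∀ y : Y, Monotone fun x => F x y)
    (hFanti : ∀ x : X, Antitone fun y => F x y)
    (hGanti : ∀ y : Y, Antitone fun x => G y x)
    (hGmono : ∀ x : X, Monotone fun y => G y x)
    (k l : ℝ) (hk0 : 0 ≤ k) (hk1 : k < 1/2) (hl0 : 0 ≤ l) (hl1 : l < 1/2)
    (hF : ∀ x u : X, ∀ y v : Y, u ≤ x → y ≤ v →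
      dist (F x y) (F u v) ≤ k * dist x (F u v) + l * dist u (F x y))
    (hG : ∀ x u : X, ∀ y v : Y, x ≤ u → v ≤ y →
      dist (G y x) (G v u) ≤ k * dist y (G v u) + l * dist v (G y x))
    (x₀ : X) (y₀ : Y) (hx₀ : x₀ ≤ F x₀ y₀) (hy₀ : G y₀ x₀ ≤ y₀)
    (p : ℕ → X) (q : ℕ → Y) (hp0 : p 0 = x₀) (hq0 : q 0 = y₀)
    (hp : ∀ n, p (n + 1) = F (p n) (q n))
    (hq : ∀ n, q (n + 1) = G (q n) (p n)) :
    ∀ n : ℕ, 1 ≤ n →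
      dist (p (n + 1)) (p n) ≤ (l / (1 - l)) ^ n * dist (p 1) (p 0) ∧
      dist (q (n + 1)) (q n) ≤ (k / (1 - k)) ^ n * dist (q 1) (q 0) := by
  have hl' : (0:ℝ) < 1 - l := by linarith
  have hk' : (0:ℝ) < 1 - k := by linarith
  have hmono : ∀ n, p n ≤ p (n + 1) ∧ q (n + 1) ≤ q n := by
    intro n
    induction n with
    | zero =>
      rw [hp 0, hq 0, hp0, hq0]
      exact ⟨hx₀, hy₀⟩
    | succ m ih =>
      refine ⟨?_, ?_⟩
      · rw [hp (m + 1)]; nth_rewrite 1 [hp m]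
        exact le_trans (hFmono (q m) ih.1) (hFanti (p (m + 1)) ih.2)
      · rw [hq (m + 1)]; nth_rewrite 2 [hq m]
        exact le_trans (hGanti (q (m + 1)) ih.1) (hGmono (p m) ih.2)
  have hstepP : ∀ n, dist (p (n + 2)) (p (n + 1)) ≤ (l / (1 - l)) * dist (p (n + 1)) (p n) := by
    intro n
    have key := hF (p (n + 1)) (p n) (q (n + 1)) (q n) (hmono n).1 (hmono n).2
    rw [← hp (n + 1), ← hp n] at key
    have h1 : dist (p (n + 1)) (p (n + 1)) = 0 := dist_self _
    have h2 : dist (p n) (p (n + 2)) ≤ dist (p n) (p (n + 1)) + dist (p (n + 1)) (p (n + 2)) :=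
      dist_triangle _ _ _
    have h3 : dist (p n) (p (n + 1)) = dist (p (n + 1)) (p n) := dist_comm _ _
    have h4 : dist (p (n + 1)) (p (n + 2)) = dist (p (n + 2)) (p (n + 1)) := dist_comm _ _
    rw [div_mul_eq_mul_div, le_div_iff₀ hl']
    nlinarith [dist_nonneg (x := p n) (y := p (n + 2))]
  have hstepQ : ∀ n, dist (q (n + 2)) (q (n + 1)) ≤ (k / (1 - k)) * dist (q (n + 1)) (q n) := by
    intro n
    have key := hG (p n) (p (n + 1)) (q n) (q (n + 1)) (hmono n).1 (hmono n).2
    rw [← hq (n + 1), ← hq n] at key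
    have h1 : dist (q (n + 1)) (q (n + 1)) = 0 := dist_self _
    have h2 : dist (q n) (q (n + 2)) ≤ dist (q n) (q (n + 1)) + dist (q (n + 1)) (q (n + 2)) :=
      dist_triangle _ _ _
    have h3 : dist (q n) (q (n + 1)) = dist (q (n + 1)) (q n) := dist_comm _ _
    have h4 : dist (q (n + 1)) (q (n + 2)) = dist (q (n + 2)) (q (n + 1)) := dist_comm _ _
    have h5 : dist (q (n + 1)) (q (n + 2)) = dist (q (n + 2)) (q (n + 1)) := dist_comm _ _
    rw [div_mul_eq_mul_div, le_div_iff₀ hk']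
    nlinarith [dist_nonneg (x := q n) (y := q (n + 2))]
  have main : ∀ n : ℕ,
      dist (p (n + 1)) (p n) ≤ (l / (1 - l)) ^ n * dist (p 1) (p 0) ∧
      dist (q (n + 1)) (q n) ≤ (k / (1 - k)) ^ n * dist (q 1) (q 0) := by
    intro n
    induction n with
    | zero => simp
    | succ m ih =>
      have hlq : 0 ≤ l / (1 - l) := div_nonneg hl0 hl'.le
      have hkq : 0 ≤ k / (1 - k) := div_nonneg hk0 hk'.le
      constructor
      · calc dist (p (m + 2)) (p (m + 1)) ≤ (l / (1 - l)) * dist (p (m + 1)) (p m) := hstepP m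
          _ ≤ (l / (1 - l)) * ((l / (1 - l)) ^ m * dist (p 1) (p 0)) :=
            mul_le_mul_of_nonneg_left ih.1 hlq
          _ = (l / (1 - l)) ^ (m + 1) * dist (p 1) (p 0) := by ring
      · calc dist (q (m + 2)) (q (m + 1)) ≤ (k / (1 - k)) * dist (q (m + 1)) (q m) := hstepQ m
          _ ≤ (k / (1 - k)) * ((k / (1 - k)) ^ m * dist (q 1) (q 0)) :=
            mul_le_mul_of_nonneg_left ih.2 hkq
          _ = (k / (1 - k)) ^ (m + 1) * dist (q 1) (q 0) := by ring
  exact fun n _ => main n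
end

section
/- Let F : X × Y → X and G : Y × X → Y have the mixed monotone property and satisfy, for nonnegative k, l with k + l < 1: d_X(F(x,y),F(u,v)) ≤ k·d_X(x,u) + l·d_Y(y,v) for x ≥₁ u, y ≤₂ v, and d_Y(G(y,x),G(v,u)) ≤ k·d_Y(y,v) + l·d_X(x,u) for x ≤₁ u, y ≥₂ v. Then for any two comparable points (x₁,y₁), (x₂,y₂) in the product order and all n ≥ 1: d_X(Fⁿ(x₁,y₁), Fⁿ(x₂,y₂)) ≤ (k+l)ⁿ·[d_X(x₁,x₂) + d_Y(y₁,y₂)] and d_Y(Gⁿ(y₁,x₁), Gⁿ(y₂,x₂)) ≤ (k+l)ⁿ·[d_Y(y₁,y₂) + d_X(x₁,x₂)]. -/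
theorem stmt_17 {X Y : Type*} [MetricSpace X] [MetricSpace Y]
    [PartialOrder X] [PartialOrder Y]
    (F : X → Y → X) (G : Y → X → Y)
    (hFmono : ∀ y : Y, Monotone fun x => F x y)
    (hFanti : ∀ x : X, Antitone fun y => F x y)
    (hGanti : ∀ y : Y, Antitone fun x => G y x)
    (hGmono : ∀ x : X, Monotone fun y => G y x)
    (k l : ℝ) (hk0 : 0 ≤ k) (hl0 : 0 ≤ l) (hkl : k + l < 1)
    (hF : ∀ x u : X, ∀ y v : Y, u ≤ x → y ≤ v →
      dist (F x y) (F u v) ≤ k * dist x u + l * dist y v)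
    (hG : ∀ x u : X, ∀ y v : Y, x ≤ u → v ≤ y →
      dist (G y x) (G v u) ≤ k * dist y v + l * dist x u)
    (x₁ x₂ : X) (y₁ y₂ : Y)
    (hcomp : (x₁ ≤ x₂ ∧ y₂ ≤ y₁) ∨ (x₂ ≤ x₁ ∧ y₁ ≤ y₂))
    (p₁ p₂ : ℕ → X) (q₁ q₂ : ℕ → Y)
    (hp₁0 : p₁ 0 = x₁) (hq₁0 : q₁ 0 = y₁) (hp₂0 : p₂ 0 = x₂) (hq₂0 : q₂ 0 = y₂)
    (hp₁ : ∀ n, p₁ (n + 1) = F (p₁ n) (q₁ n))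
    (hq₁ : ∀ n, q₁ (n + 1) = G (q₁ n) (p₁ n))
    (hp₂ : ∀ n, p₂ (n + 1) = F (p₂ n) (q₂ n))
    (hq₂ : ∀ n, q₂ (n + 1) = G (q₂ n) (p₂ n)) :
    ∀ n : ℕ, 1 ≤ n →
      dist (p₁ n) (p₂ n) ≤ (k + l) ^ n * (dist x₁ x₂ + dist y₁ y₂) ∧
      dist (q₁ n) (q₂ n) ≤ (k + l) ^ n * (dist y₁ y₂ + dist x₁ x₂) := by
  set D : ℝ := dist x₁ x₂ + dist y₁ y₂ with hD
  have key : ∀ n : ℕ,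
      ((p₁ n ≤ p₂ n ∧ q₂ n ≤ q₁ n) ∨ (p₂ n ≤ p₁ n ∧ q₁ n ≤ q₂ n)) ∧
      dist (p₁ n) (p₂ n) ≤ (k + l) ^ n * D ∧
      dist (q₁ n) (q₂ n) ≤ (k + l) ^ n * D := by
    intro n
    induction n with
    | zero =>
      refine ⟨?_, ?_, ?_⟩
      · rw [hp₁0, hq₁0, hp₂0, hq₂0]; exact hcomp
      · simp [hp₁0, hp₂0, hD]
      · simp [hq₁0, hq₂0, hD]
    | succ n ih =>
      obtain ⟨hc, hdp, hdq⟩ := ih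
      have hDnn : 0 ≤ D := by positivity
      have hpow : (0:ℝ) ≤ (k + l) ^ n * D := by positivity
      rcases hc with ⟨h1, h2⟩ | ⟨h1, h2⟩
      · refine ⟨Or.inl ⟨?_, ?_⟩, ?_, ?_⟩
        · rw [hp₁ n, hp₂ n]
          exact le_trans (hFmono (q₁ n) h1) (hFanti (p₂ n) h2)
        · rw [hq₁ n, hq₂ n]
          exact le_trans (hGmono (p₂ n) h2) (hGanti (q₁ n) h1)
        · rw [hp₁ n, hp₂ n, dist_comm]
          calc dist (F (p₂ n) (q₂ n)) (F (p₁ n) (q₁ n))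
              ≤ k * dist (p₂ n) (p₁ n) + l * dist (q₂ n) (q₁ n) :=
                hF _ _ _ _ h1 h2
            _ ≤ (k + l) ^ (n + 1) * D := by
                rw [dist_comm (p₂ n), dist_comm (q₂ n), pow_succ, mul_comm ((k+l)^n)]
                nlinarith
        · rw [hq₁ n, hq₂ n]
          calc dist (G (q₁ n) (p₁ n)) (G (q₂ n) (p₂ n))
              ≤ k * dist (q₁ n) (q₂ n) + l * dist (p₁ n) (p₂ n) :=
                hG _ _ _ _ h1 h2
            _ ≤ (k + l) ^ (n + 1) * D := by
                rw [pow_succ, mul_comm ((k+l)^n)]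
                nlinarith
      · refine ⟨Or.inr ⟨?_, ?_⟩, ?_, ?_⟩
        · rw [hp₁ n, hp₂ n]
          exact le_trans (hFmono (q₂ n) h1) (hFanti (p₁ n) h2)
        · rw [hq₁ n, hq₂ n]
          exact le_trans (hGmono (p₁ n) h2) (hGanti (q₂ n) h1)
        · rw [hp₁ n, hp₂ n]
          calc dist (F (p₁ n) (q₁ n)) (F (p₂ n) (q₂ n))
              ≤ k * dist (p₁ n) (p₂ n) + l * dist (q₁ n) (q₂ n) :=
                hF _ _ _ _ h1 h2
            _ ≤ (k + l) ^ (n + 1) * D := by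
                rw [pow_succ, mul_comm ((k+l)^n)]
                nlinarith
        · rw [hq₁ n, hq₂ n, dist_comm]
          calc dist (G (q₂ n) (p₂ n)) (G (q₁ n) (p₁ n))
              ≤ k * dist (q₂ n) (q₁ n) + l * dist (p₂ n) (p₁ n) :=
                hG _ _ _ _ h1 h2
            _ ≤ (k + l) ^ (n + 1) * D := by
                rw [dist_comm (p₂ n), dist_comm (q₂ n), pow_succ, mul_comm ((k+l)^n)]
                nlinarith
  intro n _
  obtain ⟨_, hdp, hdq⟩ := key n
  exact ⟨hdp, by rwa [hD, add_comm (dist x₁ x₂)] at hdq⟩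
end

section
/- Let (X, ≤) be a partially ordered set with a metric d making X a complete metric space, and let F : X × X → X be continuous with the mixed monotone property on X. Suppose there exists k ∈ [0,1) with d(F(x,y), F(u,v)) ≤ (k/2)[d(x,u) + d(y,v)] for all x ≥ u, y ≤ v. If there exist x₀, y₀ ∈ X with x₀ ≤ F(x₀,y₀) and y₀ ≥ F(y₀,x₀), then there exist x, y ∈ X with F(x,y) = x and F(y,x) = y. -/
theorem stmt_18 {X : Type*} [MetricSpace X] [CompleteSpace X] [PartialOrder X]
    (F : X → X → X)
    (hFc : Continuous fun p : X × X => F p.1 p.2)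
    (hFmono : ∀ y : X, Monotone fun x => F x y)
    (hFanti : ∀ x : X, Antitone fun y => F x y)
    (k : ℝ) (hk0 : 0 ≤ k) (hk1 : k < 1)
    (hF : ∀ x u y v : X, u ≤ x → y ≤ v →
      dist (F x y) (F u v) ≤ k / 2 * (dist x u + dist y v))
    (x₀ y₀ : X) (hx₀ : x₀ ≤ F x₀ y₀) (hy₀ : F y₀ x₀ ≤ y₀) :
    ∃ x y : X, F x y = x ∧ F y x = y := by
  classical
  set g : X × X → X × X := fun p => (F p.1 p.2, F p.2 p.1) with hg
  set x : ℕ → X := fun n => (g^[n] (x₀, y₀)).1 with hxdef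
  set y : ℕ → X := fun n => (g^[n] (x₀, y₀)).2 with hydef
  have hx' : ∀ n, x (n + 1) = F (x n) (y n) := by
    intro n
    simp only [hxdef, hydef, Function.iterate_succ_apply', hg]
  have hy' : ∀ n, y (n + 1) = F (y n) (x n) := by
    intro n
    simp only [hxdef, hydef, Function.iterate_succ_apply', hg]
  have hx0 : x 0 = x₀ := rfl
  have hy0 : y 0 = y₀ := rfl
  have hord : ∀ n, x n ≤ x (n + 1) ∧ y (n + 1) ≤ y n := by
    intro n
    induction n with
    | zero =>
        refine ⟨?_, ?_⟩
        · rw [hx' 0, hx0, hy0]; exact hx₀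
        · rw [hy' 0, hx0, hy0]; exact hy₀
    | succ n ih =>
        refine ⟨?_, ?_⟩
        · rw [hx' n, hx' (n + 1)]
          calc F (x n) (y n) ≤ F (x (n + 1)) (y n) := hFmono (y n) ih.1
            _ ≤ F (x (n + 1)) (y (n + 1)) := hFanti (x (n + 1)) ih.2
        · rw [hy' n, hy' (n + 1)]
          calc F (y (n + 1)) (x (n + 1)) ≤ F (y n) (x (n + 1)) := hFmono (x (n + 1)) ih.2
            _ ≤ F (y n) (x n) := hFanti (y n) ih.1
  set D : ℝ := dist (x 1) (x 0) + dist (y 1) (y 0) with hD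
  have hcontr : ∀ n, dist (x (n + 1)) (x n) + dist (y (n + 1)) (y n) ≤ k ^ n * D := by
    intro n
    induction n with
    | zero => simp [hD]
    | succ n ih =>
        have ha := hF (x (n + 1)) (x n) (y (n + 1)) (y n) (hord n).1 (hord n).2
        rw [← hx' (n + 1), ← hx' n] at ha
        have hb := hF (y n) (y (n + 1)) (x n) (x (n + 1)) (hord n).2 (hord n).1
        rw [← hy' (n + 1), ← hy' n] at hb
        have hb' : dist (y (n + 2)) (y (n + 1)) ≤
            k / 2 * (dist (x (n + 1)) (x n) + dist (y (n + 1)) (y n)) := by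
          rw [dist_comm]
          calc dist (y (n + 1)) (y (n + 2)) ≤
              k / 2 * (dist (y n) (y (n + 1)) + dist (x n) (x (n + 1))) := hb
            _ = k / 2 * (dist (x (n + 1)) (x n) + dist (y (n + 1)) (y n)) := by
                rw [dist_comm (y n), dist_comm (x n)]; ring
        calc dist (x (n + 2)) (x (n + 1)) + dist (y (n + 2)) (y (n + 1)) ≤
            k / 2 * (dist (x (n + 1)) (x n) + dist (y (n + 1)) (y n)) +
            k / 2 * (dist (x (n + 1)) (x n) + dist (y (n + 1)) (y n)) := add_le_add ha hb'
          _ = k * (dist (x (n + 1)) (x n) + dist (y (n + 1)) (y n)) := by ring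
          _ ≤ k * (k ^ n * D) := mul_le_mul_of_nonneg_left ih hk0
          _ = k ^ (n + 1) * D := by ring
  have hcx : ∀ n, dist (x n) (x (n + 1)) ≤ D * k ^ n := by
    intro n
    rw [dist_comm, mul_comm]
    calc dist (x (n + 1)) (x n) ≤
        dist (x (n + 1)) (x n) + dist (y (n + 1)) (y n) := le_add_of_nonneg_right dist_nonneg
      _ ≤ k ^ n * D := hcontr n
  have hcy : ∀ n, dist (y n) (y (n + 1)) ≤ D * k ^ n := by
    intro n
    rw [dist_comm, mul_comm]
    calc dist (y (n + 1)) (y n) ≤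
        dist (x (n + 1)) (x n) + dist (y (n + 1)) (y n) := le_add_of_nonneg_left dist_nonneg
      _ ≤ k ^ n * D := hcontr n
  obtain ⟨a, ha⟩ := cauchySeq_tendsto_of_complete (cauchySeq_of_le_geometric k D hk1 hcx)
  obtain ⟨b, hb⟩ := cauchySeq_tendsto_of_complete (cauchySeq_of_le_geometric k D hk1 hcy)
  have hpair : Filter.Tendsto (fun n => (x n, y n)) Filter.atTop (nhds (a, b)) :=
    ha.prodMk_nhds hb
  have hFab : Filter.Tendsto (fun n => F (x n) (y n)) Filter.atTop (nhds (F a b)) :=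
    (hFc.tendsto (a, b)).comp hpair
  have hFba : Filter.Tendsto (fun n => F (y n) (x n)) Filter.atTop (nhds (F b a)) := by
    have hpair' : Filter.Tendsto (fun n => (y n, x n)) Filter.atTop (nhds (b, a)) :=
      hb.prodMk_nhds ha
    exact (hFc.tendsto (b, a)).comp hpair'
  have hxa : Filter.Tendsto (fun n => F (x n) (y n)) Filter.atTop (nhds a) := by
    have : Filter.Tendsto (fun n => x (n + 1)) Filter.atTop (nhds a) :=
      ha.comp (Filter.tendsto_add_atTop_nat 1)
    simpa only [hx'] using this
  have hyb : Filter.Tendsto (fun n => F (y n) (x n)) Filter.atTop (nhds b) := by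
    have : Filter.Tendsto (fun n => y (n + 1)) Filter.atTop (nhds b) :=
      hb.comp (Filter.tendsto_add_atTop_nat 1)
    simpa only [hy'] using this
  exact ⟨a, b, tendsto_nhds_unique hFab hxa, tendsto_nhds_unique hFba hyb⟩
end
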